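/- arXiv:math/0209334 — 5 statements merged into one kernel-verified Lean document; each statement's English description precedes it below -/
import Mathlib

section
/- Let T₃ be the infinite 3-regular tree and let v₀, v₁, v₂, … be an infinite simple path in T₃. Define T to be the set of vertices u of T₃ such that d(u, vₙ) ≤ n for all sufficiently large n. Then from every vertex u of T there is a unique infinite simple path in T starting at u. -/
open SimpleGraph Walk

section Aux

variable {V : Type*} {G : SimpleGraph V}

private lemma tree_path_length (ht : G.IsTree) {a b : V} (p : G.Walk a b) (hp : p.IsPath) :
    p.length = G.dist a b := by
  obtain ⟨q, hq, hql⟩ := ht.isConnected.exists_path_of_dist a b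
  rw [(ht.existsUnique_path a b).unique hp hq]
  exact hql

private lemma exists_dec (ht : G.IsTree) {x w : V} (h : 0 < G.dist x w) :
    ∃ y, G.Adj x y ∧ G.dist y w + 1 = G.dist x w := by
  obtain ⟨p, hp, hl⟩ := ht.isConnected.exists_path_of_dist x w
  cases p with
  | nil => simp at hl; simp [SimpleGraph.dist_self] at h
  | @cons _ y _ hadj q =>
    refine ⟨y, hadj, ?_⟩
    have h1 : G.dist y w ≤ q.length := dist_le q
    have h2 : G.dist x w ≤ G.dist x y + G.dist y w := ht.isConnected.dist_triangle
    have h3 : G.dist x y = 1 := dist_eq_one_iff_adj.2 hadj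
    simp only [Walk.length_cons] at hl
    omega

private lemma uniq_dec (ht : G.IsTree) {x w y y' : V} (ha : G.Adj x y) (ha' : G.Adj x y')
    (hd : G.dist y w + 1 = G.dist x w) (hd' : G.dist y' w + 1 = G.dist x w) : y = y' := by
  classical
  obtain ⟨p, hp, hl⟩ := ht.isConnected.exists_path_of_dist y w
  obtain ⟨p', hp', hl'⟩ := ht.isConnected.exists_path_of_dist y' w
  have hxp : x ∉ p.support := by
    intro hx
    have h1 := Walk.length_dropUntil_le p hx
    have h2 := dist_le (p.dropUntil x hx)
    omega
  have hxp' : x ∉ p'.support := by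
    intro hx
    have h1 := Walk.length_dropUntil_le p' hx
    have h2 := dist_le (p'.dropUntil x hx)
    omega
  have hips : (Walk.cons ha p).IsPath := hp.cons hxp
  have hips' : (Walk.cons ha' p').IsPath := hp'.cons hxp'
  have heq := (ht.existsUnique_path x w).unique hips hips'
  have := congrArg (fun q => q.getVert 1) heq
  simpa [Walk.getVert_cons _ _ one_ne_zero] using this

private lemma dist_adj_step (ht : G.IsTree) {x y : V} (ha : G.Adj x y) (w : V) :
    G.dist w y = G.dist w x + 1 ∨ G.dist w x = G.dist w y + 1 := by
  classical
  obtain ⟨p, hp, hl⟩ := ht.isConnected.exists_path_of_dist w x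
  by_cases hy : y ∈ p.support
  · right
    have h1 : G.dist w y ≤ (p.takeUntil y hy).length := dist_le _
    have h2 : G.dist y x ≤ (p.dropUntil y hy).length := dist_le _
    have h3 : (p.takeUntil y hy).length + (p.dropUntil y hy).length = p.length := by
      have h := congrArg Walk.length (p.take_spec hy)
      rwa [Walk.length_append] at h
    have h4 : G.dist w x ≤ G.dist w y + G.dist y x := ht.isConnected.dist_triangle
    have h5 : G.dist y x = 1 := by rw [SimpleGraph.dist_comm]; exact dist_eq_one_iff_adj.2 ha
    omega
  · left
    have hc : (p.concat ha).IsPath := by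
      rw [← Walk.isPath_reverse_iff, Walk.reverse_concat]
      exact (hp.reverse).cons (by simpa [Walk.support_reverse] using hy)
    have hlen := tree_path_length ht _ hc
    rw [Walk.length_concat, hl] at hlen
    omega

private def rayWalk (G : SimpleGraph V) (v : ℕ → V) (hvadj : ∀ n : ℕ, G.Adj (v n) (v (n + 1))) :
    (n : ℕ) → G.Walk (v 0) (v n)
  | 0 => Walk.nil
  | n + 1 => (rayWalk G v hvadj n).concat (hvadj n)

private lemma rayWalk_support {v : ℕ → V} {hvadj : ∀ n : ℕ, G.Adj (v n) (v (n + 1))}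
    (n : ℕ) : ∀ x ∈ (rayWalk G v hvadj n).support, ∃ k ≤ n, v k = x := by
  induction n with
  | zero => intro x hx; simp [rayWalk] at hx; exact ⟨0, le_refl _, hx.symm⟩
  | succ n ih =>
    intro x hx
    rw [rayWalk, Walk.concat_eq_append, Walk.mem_support_append_iff] at hx
    rcases hx with hx | hx
    · obtain ⟨k, hk, hkx⟩ := ih x hx
      exact ⟨k, hk.trans n.le_succ, hkx⟩
    · simp at hx
      rcases hx with hx | hx
      · exact ⟨n, n.le_succ, hx.symm⟩
      · exact ⟨n + 1, le_refl _, hx.symm⟩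

private lemma rayWalk_isPath {v : ℕ → V} (hvinj : Function.Injective v)
    {hvadj : ∀ n : ℕ, G.Adj (v n) (v (n + 1))} (n : ℕ) :
    (rayWalk G v hvadj n).IsPath := by
  induction n with
  | zero => exact Walk.IsPath.nil
  | succ n ih =>
    rw [rayWalk, ← Walk.isPath_reverse_iff, Walk.reverse_concat]
    refine ih.reverse.cons ?_
    rw [Walk.support_reverse, List.mem_reverse]
    intro hmem
    obtain ⟨k, hk, hkx⟩ := rayWalk_support n _ hmem
    have := hvinj hkx
    omega

private lemma ray_dist (ht : G.IsTree) {v : ℕ → V} (hvinj : Function.Injective v)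
    (hvadj : ∀ n : ℕ, G.Adj (v n) (v (n + 1))) (n : ℕ) :
    G.dist (v 0) (v n) = n := by
  have h2 : ∀ m, (rayWalk G v hvadj m).length = m := by
    intro m
    induction m with
    | zero => rfl
    | succ m ih => rw [rayWalk, Walk.length_concat, ih]
  have h1 := tree_path_length ht _ (rayWalk_isPath hvinj (hvadj := hvadj) n)
  rw [h2 n] at h1
  omega

end Aux

/- STATEMENT 0: In the subtree T of the 3-regular tree T₃ induced on
   {u : ∃ N, ∀ n ≥ N, d(u, vₙ) ≤ n} for a fixed infinite simple path (vₙ),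
   every vertex u of T is the start of a unique infinite simple path in T. -/
theorem unique_infinite_simple_path
    {V : Type*} (G : SimpleGraph V) [G.LocallyFinite]
    (htree : G.IsTree) (hdeg : ∀ x : V, G.degree x = 3)
    (v : ℕ → V) (hvinj : Function.Injective v)
    (hvadj : ∀ n : ℕ, G.Adj (v n) (v (n + 1)))
    (S : Set V) (hS : S = {u : V | ∃ N : ℕ, ∀ n ≥ N, G.dist u (v n) ≤ n})
    (u : V) (hu : u ∈ S) :
    ∃! p : ℕ → V, p 0 = u ∧ Function.Injective p ∧
      (∀ n, p n ∈ S) ∧ (∀ n, G.Adj (p n) (p (n + 1))) := by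
  classical
  have hconn := htree.isConnected
  -- the "Busemann-like" function D
  set D : V → ℕ → ℤ := fun x n => (G.dist x (v n) : ℤ) - n with hD
  have hstep : ∀ x n, D x (n + 1) = D x n ∨ D x (n + 1) = D x n - 2 := by
    intro x n
    rcases dist_adj_step htree (hvadj n) x with h | h
    · left; simp only [hD]; omega
    · right; simp only [hD]; omega
  have hanti : ∀ x m n, m ≤ n → D x n ≤ D x m := by
    intro x m n hmn
    induction n with
    | zero =>
      have hm : m = 0 := by omega
      subst hm
      exact le_refl _
    | succ n ih =>
      rcases Nat.lt_or_ge m (n + 1) with h | h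
      · have := ih (by omega)
        rcases hstep x n with h2 | h2 <;> omega
      · have : m = n + 1 := by omega
        subst this; omega
  have hlb : ∀ x n, -(G.dist x (v 0) : ℤ) ≤ D x n := by
    intro x n
    have h1 : G.dist (v 0) (v n) = n := ray_dist htree hvinj hvadj n
    have h2 : G.dist (v 0) (v n) ≤ G.dist (v 0) x + G.dist x (v n) := hconn.dist_triangle
    have h3 : G.dist (v 0) x = G.dist x (v 0) := dist_comm
    simp only [hD]
    omega
  -- stabilization
  have hstab : ∀ x : V, ∃ N : ℕ, ∀ n ≥ N, D x n = D x N := by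
    intro x
    obtain ⟨lb, ⟨n₀, hn₀⟩, hlbmin⟩ :=
      Int.exists_least_of_bdd (P := fun z => ∃ n, D x n = z)
        ⟨-(G.dist x (v 0) : ℤ), fun z ⟨n, hn⟩ => hn ▸ hlb x n⟩ ⟨D x 0, 0, rfl⟩
    refine ⟨n₀, fun n hn => ?_⟩
    have h1 : D x n ≤ D x n₀ := hanti x n₀ n hn
    have h2 : lb ≤ D x n := hlbmin _ ⟨n, rfl⟩
    omega
  choose N hN using hstab
  set b : V → ℤ := fun x => D x (N x) with hb
  have hbN : ∀ x, ∀ n ≥ N x, D x n = b x := fun x => hN x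
  have hble : ∀ x n, b x ≤ D x n := by
    intro x n
    have h1 : b x = D x (max n (N x)) := (hbN x _ (le_max_right _ _)).symm
    have h2 := hanti x n (max n (N x)) (le_max_left _ _)
    omega
  have hSb : ∀ x, x ∈ S ↔ b x ≤ 0 := by
    intro x
    rw [hS]
    constructor
    · rintro ⟨N', hN'⟩
      have h1 := hN' (max N' (N x)) (le_max_left _ _)
      have h2 := hbN x (max N' (N x)) (le_max_right _ _)
      simp only [hD] at h2
      omega
    · intro hbx
      refine ⟨N x, fun n hn => ?_⟩
      have := hbN x n hn
      simp only [hD] at this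
      omega
  have hadjb : ∀ x y, G.Adj x y → b y = b x + 1 ∨ b y = b x - 1 := by
    intro x y hxy
    set n := max (N x) (N y) with hn
    have h1 := hbN x n (le_max_left _ _)
    have h2 := hbN y n (le_max_right _ _)
    have h3 : G.dist (v n) y = G.dist (v n) x + 1 ∨ G.dist (v n) x = G.dist (v n) y + 1 :=
      dist_adj_step htree hxy (v n)
    have h4 : G.dist (v n) x = G.dist x (v n) := SimpleGraph.dist_comm
    have h5 : G.dist (v n) y = G.dist y (v n) := SimpleGraph.dist_comm
    simp only [hD] at h1 h2
    omega
  -- every vertex has a neighbor with smaller b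
  have hexists : ∀ x, ∃ y, G.Adj x y ∧ b y = b x - 1 := by
    intro x
    set n := max (N x) (G.dist x (v 0) + 1) with hn
    have h1 := hbN x n (le_max_left _ _)
    have h2 := hlb x n
    have hpos : 0 < G.dist x (v n) := by
      have h3 : (G.dist x (v 0) + 1 : ℕ) ≤ n := le_max_right _ _
      simp only [hD] at h1 h2
      omega
    obtain ⟨y, hxy, hy⟩ := exists_dec htree hpos
    refine ⟨y, hxy, ?_⟩
    have h6 : b y ≤ D y n := hble y n
    have h7 : D y n = D x n - 1 := by simp only [hD]; omega
    rcases hadjb x y hxy with h | h <;> omega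
  -- uniqueness of the decreasing neighbor
  have huniq : ∀ x y y', G.Adj x y → G.Adj x y' → b y = b x - 1 → b y' = b x - 1 → y = y' := by
    intro x y y' hxy hxy' hby hby'
    set n := max (N x) (max (N y) (N y')) with hn
    have h1 := hbN x n (le_max_left _ _)
    have h2 := hbN y n ((le_max_left _ _).trans (le_max_right _ _))
    have h3 := hbN y' n ((le_max_right _ _).trans (le_max_right _ _))
    simp only [hD] at h1 h2 h3
    have hd : G.dist y (v n) + 1 = G.dist x (v n) := by omega
    have hd' : G.dist y' (v n) + 1 = G.dist x (v n) := by omega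
    exact uniq_dec htree hxy hxy' hd hd'
  -- construct the path
  let p : ℕ → V := fun n => Nat.rec u (fun _ x => Classical.choose (hexists x)) n
  have hpsucc : ∀ n, p (n + 1) = Classical.choose (hexists (p n)) := fun n => rfl
  have hp0 : p 0 = u := rfl
  have hpadj : ∀ n, G.Adj (p n) (p (n + 1)) := by
    intro n
    rw [hpsucc]
    exact (Classical.choose_spec (hexists (p n))).1
  have hpb : ∀ n, b (p n) = b u - n := by
    intro n
    induction n with
    | zero => rw [hp0]; simp
    | succ n ih =>
      rw [hpsucc]
      have := (Classical.choose_spec (hexists (p n))).2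
      push_cast
      omega
  have hbu : b u ≤ 0 := (hSb u).1 hu
  refine ⟨p, ⟨hp0, ?_, ?_, hpadj⟩, ?_⟩
  · -- injectivity
    intro m n hmn
    have h1 := hpb m
    have h2 := hpb n
    rw [hmn] at h1
    omega
  · -- membership in S
    intro n
    rw [hSb]
    have := hpb n
    omega
  · -- uniqueness
    rintro q ⟨hq0, hqinj, hqS, hqadj⟩
    have hqb : ∀ n, b (q n) ≤ 0 := fun n => (hSb (q n)).1 (hqS n)
    -- every step of q must decrease b
    have hqdec : ∀ n, b (q (n + 1)) = b (q n) - 1 := by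
      intro n
      by_contra hcon
      have hinc : b (q (n + 1)) = b (q n) + 1 := by
        rcases hadjb _ _ (hqadj n) with h | h
        · exact h
        · exact absurd h hcon
      have hchain : ∀ k, b (q (n + k + 1)) = b (q (n + k)) + 1 := by
        intro k
        induction k with
        | zero => simpa using hinc
        | succ k ih =>
          rcases hadjb _ _ (hqadj (n + k + 1)) with h | h
          · have : n + (k + 1) + 1 = n + k + 1 + 1 := by omega
            rw [this]
            have : n + (k + 1) = n + k + 1 := by omega
            rw [this]
            exact h
          · exfalso
            have hprev : b (q (n + k)) = b (q (n + k + 1)) - 1 := by omega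
            have heq : q (n + k + 1 + 1) = q (n + k) :=
              huniq (q (n + k + 1)) _ _ (hqadj (n + k + 1)) ((hqadj (n + k)).symm) h hprev
            have := hqinj heq
            omega
      have hgrow : ∀ k, b (q (n + k)) = b (q n) + k := by
        intro k
        induction k with
        | zero => simp
        | succ k ih =>
          have := hchain k
          push_cast
          have hrw : n + (k + 1) = n + k + 1 := by omega
          rw [hrw]
          omega
      have hk := hgrow ((-b (q n)).toNat + 1)
      have hq2 := hqb (n + ((-b (q n)).toNat + 1))
      have := Int.self_le_toNat (-b (q n))
      omega
    -- q coincides with p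
    funext n
    induction n with
    | zero => rw [hq0, hp0]
    | succ n ih =>
      have h1 : b (q (n + 1)) = b (p n) - 1 := by rw [← ih]; exact hqdec n
      have h2 : b (p (n + 1)) = b (p n) - 1 := by
        have := hpb (n + 1)
        have := hpb n
        push_cast at *
        omega
      refine huniq (p n) _ _ ?_ (hpadj n) h1 h2
      rw [← ih]
      exact hqadj n
end

section
/- Let T be the subtree of the 3-regular tree defined by T = {u : ∃ N, ∀ n ≥ N, d(u, vₙ) ≤ n} for an infinite simple path (vₙ). Then there exist constants a > 1 and c > 0 such that the number of vertices of T in the combinatorial ball B(v₀, r) satisfies c·aʳ ≤ |B(v₀, r) ∩ T| ≤ aʳ/c for all sufficiently large r. In particular, T has exponential growth. -/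
open SimpleGraph

namespace SubtreeGrowthAux

variable {V : Type*} {G : SimpleGraph V}

/-- In a tree, every path between two vertices has length equal to the distance. -/
private lemma path_length_eq (ht : G.IsTree) {x y : V} (p : G.Walk x y) (hp : p.IsPath) :
    p.length = G.dist x y := by
  classical
  obtain ⟨w, hw⟩ := (ht.isConnected.preconnected x y).exists_walk_length_eq_dist
  have h1 : (⟨p, hp⟩ : G.Path x y) = ⟨w.bypass, w.bypass_isPath⟩ :=
    ht.IsAcyclic.path_unique _ _
  have h2 : p = w.bypass := congrArg Subtype.val h1
  have h3 : p.length ≤ G.dist x y := by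
    rw [h2, ← hw]; exact w.length_bypass_le
  exact le_antisymm h3 (SimpleGraph.dist_le p)

/-- If `w` lies on a path from `x` to `y` in a tree, then `w` lies between `x` and `y`. -/
private lemma dist_add_dist_le (ht : G.IsTree) {x y w : V} (p : G.Walk x y) (hp : p.IsPath)
    (hw : w ∈ p.support) : G.dist x w + G.dist w y ≤ G.dist x y := by
  classical
  have hlen : (p.takeUntil w hw).length + (p.dropUntil w hw).length = p.length := by
    rw [← Walk.length_append, p.take_spec hw]
  calc G.dist x w + G.dist w y
      ≤ (p.takeUntil w hw).length + (p.dropUntil w hw).length :=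
        Nat.add_le_add (SimpleGraph.dist_le _) (SimpleGraph.dist_le _)
    _ = p.length := hlen
    _ = G.dist x y := path_length_eq ht p hp

variable {v : ℕ → V}

/-- The path along the ray from `v i` to `v (i+k)`. -/
private lemma exists_ray_path (hvadj : ∀ n : ℕ, G.Adj (v n) (v (n + 1)))
    (hvinj : Function.Injective v) (i k : ℕ) :
    ∃ p : G.Walk (v i) (v (i + k)), p.IsPath ∧ p.length = k ∧
      (∀ w ∈ p.support, ∃ j ≤ k, w = v (i + j)) ∧ (∀ j ≤ k, v (i + j) ∈ p.support) := by
  induction k with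
  | zero =>
      refine ⟨Walk.nil, Walk.IsPath.nil, rfl, ?_, ?_⟩
      · intro w hw
        simp only [Walk.support_nil, List.mem_singleton] at hw
        exact ⟨0, le_rfl, hw⟩
      · intro j hj
        interval_cases j
        simp
  | succ k ih =>
      obtain ⟨p, hp, hlen, hsup, hmem⟩ := ih
      have hnotmem : v (i + (k + 1)) ∉ p.support := by
        intro h
        obtain ⟨j, hj, he⟩ := hsup _ h
        have := hvinj he
        omega
      refine ⟨p.concat (hvadj (i + k)), ?_, ?_, ?_, ?_⟩
      · apply Walk.IsPath.mk'
        rw [Walk.support_concat]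
        rw [List.nodup_append]
        refine ⟨hp.support_nodup, List.nodup_singleton _, ?_⟩
        intro a ha b hb hab
        simp only [List.mem_singleton] at hb
        subst hb hab
        exact hnotmem ha
      · rw [Walk.length_concat, hlen]
      · intro w hw
        rw [Walk.support_concat, List.mem_append] at hw
        rcases hw with hw | hw
        · obtain ⟨j, hj, he⟩ := hsup w hw
          exact ⟨j, by omega, he⟩
        · simp only [List.mem_singleton] at hw
          exact ⟨k + 1, le_rfl, hw⟩
      · intro j hj
        rw [Walk.support_concat, List.mem_append]
        rcases Nat.lt_or_ge j (k + 1) with h | h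
        · exact Or.inl (hmem j (by omega))
        · have : j = k + 1 := by omega
          subst this
          simp

/-- Distances along the ray. -/
private lemma ray_dist (ht : G.IsTree) (hvadj : ∀ n : ℕ, G.Adj (v n) (v (n + 1)))
    (hvinj : Function.Injective v) {i j : ℕ} (hij : i ≤ j) :
    G.dist (v i) (v j) = j - i := by
  obtain ⟨p, hp, hlen, -, -⟩ := exists_ray_path hvadj hvinj i (j - i)
  have h := path_length_eq ht p hp
  rw [hlen] at h
  rw [Nat.add_sub_cancel' hij] at h
  exact h.symm

/-- Three-point lemma: `v m` lies on the path from `u` to `v 0` or on the path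
from `u` to `v n`, for `m ≤ n`. -/
private lemma three_point (ht : G.IsTree) (hvadj : ∀ n : ℕ, G.Adj (v n) (v (n + 1)))
    (hvinj : Function.Injective v) (u : V) {m n : ℕ} (hmn : m ≤ n) :
    G.dist u (v m) + m ≤ G.dist u (v 0) ∨ G.dist u (v m) + (n - m) ≤ G.dist u (v n) := by
  classical
  obtain ⟨w0⟩ := ht.isConnected.preconnected u (v 0)
  obtain ⟨wn⟩ := ht.isConnected.preconnected u (v n)
  set P : G.Walk u (v 0) := w0.bypass with hP_def
  have hP : P.IsPath := w0.bypass_isPath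
  set Q : G.Walk u (v n) := wn.bypass with hQ_def
  have hQ : Q.IsPath := wn.bypass_isPath
  set W : G.Walk (v 0) (v n) := P.reverse.append Q with hW_def
  obtain ⟨p0n, hp0n, hlen0n, hsup0n, hmem0n⟩ := exists_ray_path hvadj hvinj 0 n
  -- the canonical path from v 0 to v n, with endpoints rewritten
  have h0n : (0 : ℕ) + n = n := Nat.zero_add n
  let p0n' : G.Walk (v 0) (v n) := p0n.copy rfl (congrArg v h0n)
  have hp0n' : p0n'.IsPath := by simpa [p0n'] using hp0n
  have huniq : (⟨W.bypass, W.bypass_isPath⟩ : G.Path (v 0) (v n)) = ⟨p0n', hp0n'⟩ :=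
    ht.IsAcyclic.path_unique _ _
  have hweq : W.bypass = p0n' := congrArg Subtype.val huniq
  have hvm_mem : v m ∈ W.bypass.support := by
    rw [hweq]
    have : v (0 + m) ∈ p0n.support := hmem0n m hmn
    simpa [p0n', Nat.zero_add] using this
  have hvm_W : v m ∈ W.support := W.support_bypass_subset hvm_mem
  rw [hW_def, Walk.mem_support_append_iff] at hvm_W
  rcases hvm_W with h | h
  · left
    rw [Walk.support_reverse, List.mem_reverse] at h
    have h1 := dist_add_dist_le ht P hP h
    have h2 : G.dist (v m) (v 0) = m := by
      rw [SimpleGraph.dist_comm]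
      have := ray_dist ht hvadj hvinj (Nat.zero_le m)
      simpa using this
    omega
  · right
    have h1 := dist_add_dist_le ht Q hQ h
    have h2 : G.dist (v m) (v n) = n - m := ray_dist ht hvadj hvinj hmn
    omega

/-- Appending the edge `q — p` to a path from `x` to `q` stays a path,
provided `p` is not closer to `x` than `q` is. -/
private lemma concat_isPath (ht : G.IsTree) {x p q : V} (hadj : G.Adj p q)
    (hle : G.dist x q ≤ G.dist x p) {P : G.Walk x q} (hP : P.IsPath) :
    (P.concat hadj.symm).IsPath := by
  classical
  have hpns : p ∉ P.support := by
    intro h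
    have h1 := dist_add_dist_le ht P hP h
    have h2 : G.dist p q ≠ 0 := fun h0 =>
      hadj.ne ((ht.isConnected.dist_eq_zero_iff).mp h0)
    omega
  apply Walk.IsPath.mk'
  rw [Walk.support_concat, List.nodup_append]
  refine ⟨hP.support_nodup, List.nodup_singleton _, ?_⟩
  intro a ha b hb hab
  simp only [List.mem_singleton] at hb
  subst hb hab
  exact hpns ha

/-- In a tree, a neighbor not farther from `x` is exactly one step closer. -/
private lemma adj_dist_eq (ht : G.IsTree) {x p q : V} (hadj : G.Adj p q)
    (hle : G.dist x q ≤ G.dist x p) : G.dist x q + 1 = G.dist x p := by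
  classical
  obtain ⟨w⟩ := ht.isConnected.preconnected x q
  have hP : w.bypass.IsPath := w.bypass_isPath
  have hW := concat_isPath ht hadj hle hP
  have h1 := path_length_eq ht _ hW
  rw [Walk.length_concat, path_length_eq ht _ hP] at h1
  exact h1

/-- In a tree, the closer neighbor is unique. -/
private lemma parent_unique (ht : G.IsTree) {x p q₁ q₂ : V} (h1 : G.Adj p q₁) (h2 : G.Adj p q₂)
    (hle1 : G.dist x q₁ ≤ G.dist x p) (hle2 : G.dist x q₂ ≤ G.dist x p) : q₁ = q₂ := by
  classical
  obtain ⟨w1⟩ := ht.isConnected.preconnected x q₁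
  obtain ⟨w2⟩ := ht.isConnected.preconnected x q₂
  have hP1 : w1.bypass.IsPath := w1.bypass_isPath
  have hP2 : w2.bypass.IsPath := w2.bypass_isPath
  have hW1 := concat_isPath ht h1 hle1 hP1
  have hW2 := concat_isPath ht h2 hle2 hP2
  have huniq : (⟨w1.bypass.concat h1.symm, hW1⟩ : G.Path x p)
      = ⟨w2.bypass.concat h2.symm, hW2⟩ := ht.IsAcyclic.path_unique _ _
  have hweq : w1.bypass.concat h1.symm = w2.bypass.concat h2.symm :=
    congrArg Subtype.val huniq
  have hq2mem : q₂ ∈ (w1.bypass.concat h1.symm).support := by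
    rw [hweq, Walk.support_concat, List.mem_append]
    exact Or.inl (Walk.end_mem_support _)
  rw [Walk.support_concat, List.mem_append] at hq2mem
  rcases hq2mem with h | h
  · have hd := dist_add_dist_le ht _ hP1 h
    have ha := adj_dist_eq ht h1 hle1
    have hb := adj_dist_eq ht h2 hle2
    have : G.dist q₂ q₁ = 0 := by omega
    exact ((ht.isConnected.dist_eq_zero_iff).mp this).symm
  · simp only [List.mem_singleton] at h
    exact absurd h.symm h2.ne

/-- Every vertex at distance `k+1` has a neighbor at distance `k`. -/
private lemma exists_parent (hconn : G.Connected) {x u : V} {k : ℕ}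
    (h : G.dist x u = k + 1) : ∃ p, G.Adj p u ∧ G.dist x p = k := by
  classical
  obtain ⟨w, hw⟩ := (hconn.preconnected x u).exists_walk_length_eq_dist
  rw [h] at hw
  have hr : w.reverse.length = k + 1 := by rw [Walk.length_reverse, hw]
  cases hw2 : w.reverse with
  | nil =>
      rw [hw2] at hr
      simp at hr
  | @cons _ b _ hadj q =>
      refine ⟨b, hadj.symm, ?_⟩
      have hq : q.length = k := by
        rw [hw2] at hr
        simpa using hr
      have h1 : G.dist x b ≤ k := by
        have := SimpleGraph.dist_le q.reverse
        rwa [Walk.length_reverse, hq] at this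
      have h2 : G.dist x u ≤ G.dist x b + 1 := by
        have ht := hconn.dist_triangle (u := x) (v := b) (w := u)
        have hb : G.dist b u = 1 := by
          rw [SimpleGraph.dist_eq_one_iff_adj]
          exact hadj.symm
        omega
      omega

private def sphereSize : ℕ → ℕ
  | 0 => 1
  | k + 1 => 3 * 2 ^ k

/-- Cardinality of spheres in the 3-regular tree. -/
private lemma sphere_card [G.LocallyFinite] (ht : G.IsTree) (hdeg : ∀ y : V, G.degree y = 3)
    (x : V) : ∀ k : ℕ, ∃ s : Finset V,
      (↑s : Set V) = {u | G.dist x u = k} ∧ s.card = sphereSize k := by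
  classical
  intro k
  induction k with
  | zero =>
      refine ⟨{x}, ?_, by simp [sphereSize]⟩
      ext u
      simp only [Finset.coe_singleton, Set.mem_singleton_iff, Set.mem_setOf_eq]
      rw [(ht.isConnected.dist_eq_zero_iff)]
      exact comm
  | succ k ih =>
      rcases k with _ | k
      · -- radius 1 : the neighbors of x
        refine ⟨G.neighborFinset x, ?_, ?_⟩
        · ext u
          simp only [Finset.mem_coe, mem_neighborFinset, Set.mem_setOf_eq]
          rw [SimpleGraph.dist_eq_one_iff_adj]
        · rw [show sphereSize 1 = 3 from rfl, ← hdeg x]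
          rfl
      · -- from radius k+1 to k+2
        obtain ⟨s, hs, hcard⟩ := ih
        have hmem_s : ∀ p, p ∈ s ↔ G.dist x p = k + 1 := by
          intro p
          rw [← Finset.mem_coe, hs, Set.mem_setOf_eq]
        set child : V → Finset V :=
          fun p => (G.neighborFinset p).filter (fun q => G.dist x q = k + 2) with hchild
        have hmem_child : ∀ p q, q ∈ child p ↔ G.Adj p q ∧ G.dist x q = k + 2 := by
          intro p q
          simp [hchild, Finset.mem_filter, mem_neighborFinset]
        have hdisj : ∀ p₁ ∈ s, ∀ p₂ ∈ s, p₁ ≠ p₂ → Disjoint (child p₁) (child p₂) := by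
          intro p₁ hp₁ p₂ hp₂ hne
          rw [Finset.disjoint_left]
          intro q hq₁ hq₂
          rw [hmem_child] at hq₁ hq₂
          apply hne
          exact parent_unique ht hq₁.1.symm hq₂.1.symm
            (by rw [(hmem_s p₁).mp hp₁, hq₁.2]; omega)
            (by rw [(hmem_s p₂).mp hp₂, hq₁.2]; omega)
        have hchild_card : ∀ p ∈ s, (child p).card = 2 := by
          intro p hp
          have hdp : G.dist x p = k + 1 := (hmem_s p).mp hp
          obtain ⟨par, hpar_adj, hpar⟩ := exists_parent ht.isConnected hdp
          have hsub : child p = (G.neighborFinset p).erase par := by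
            ext q
            rw [hmem_child, Finset.mem_erase, mem_neighborFinset]
            constructor
            · rintro ⟨hadj, hq⟩
              refine ⟨?_, hadj⟩
              intro he
              rw [he] at hq
              omega
            · rintro ⟨hne, hadj⟩
              refine ⟨hadj, ?_⟩
              have htri : G.dist x q ≤ G.dist x p + 1 := by
                have ht2 := ht.isConnected.dist_triangle (u := x) (v := p) (w := q)
                have hpq : G.dist p q = 1 := by
                  rw [SimpleGraph.dist_eq_one_iff_adj]; exact hadj
                omega
              by_contra hne2
              have hle : G.dist x q ≤ G.dist x p := by omega
              have := parent_unique ht hadj hpar_adj.symm hle (by omega)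
              exact hne this
          rw [hsub, Finset.card_erase_of_mem]
          · have : (G.neighborFinset p).card = 3 := hdeg p
            omega
          · rw [mem_neighborFinset]; exact hpar_adj.symm
        refine ⟨s.biUnion child, ?_, ?_⟩
        · ext u
          simp only [Finset.coe_biUnion, Set.mem_iUnion, Finset.mem_coe, Set.mem_setOf_eq]
          constructor
          · rintro ⟨p, hp, hu⟩
            exact ((hmem_child p u).mp hu).2
          · intro hu
            obtain ⟨p, hadj, hdp⟩ := exists_parent ht.isConnected hu
            exact ⟨p, (hmem_s p).mpr hdp, (hmem_child p u).mpr ⟨hadj, hu⟩⟩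
        · rw [Finset.card_biUnion hdisj, Finset.sum_congr rfl hchild_card,
            Finset.sum_const, hcard]
          show 3 * 2 ^ k * 2 = sphereSize (k + 2)
          show 3 * 2 ^ k * 2 = 3 * 2 ^ (k + 1)
          ring

/-- Cardinality of balls in the 3-regular tree: `3 * 2 ^ m - 2`. -/
private lemma ball_card [G.LocallyFinite] (ht : G.IsTree) (hdeg : ∀ y : V, G.degree y = 3)
    (x : V) : ∀ m : ℕ, ∃ b : Finset V,
      (↑b : Set V) = {u | G.dist x u ≤ m} ∧ b.card = 3 * 2 ^ m - 2 := by
  classical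
  intro m
  induction m with
  | zero =>
      refine ⟨{x}, ?_, by norm_num⟩
      ext u
      simp only [Finset.coe_singleton, Set.mem_singleton_iff, Set.mem_setOf_eq, Nat.le_zero]
      rw [(ht.isConnected.dist_eq_zero_iff)]
      exact comm
  | succ m ih =>
      obtain ⟨b, hb, hbcard⟩ := ih
      obtain ⟨s, hs, hscard⟩ := sphere_card ht hdeg x (m + 1)
      have hmem_b : ∀ u, u ∈ b ↔ G.dist x u ≤ m := by
        intro u; rw [← Finset.mem_coe, hb, Set.mem_setOf_eq]
      have hmem_s : ∀ u, u ∈ s ↔ G.dist x u = m + 1 := by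
        intro u; rw [← Finset.mem_coe, hs, Set.mem_setOf_eq]
      refine ⟨b ∪ s, ?_, ?_⟩
      · ext u
        simp only [Finset.coe_union, Set.mem_union, Finset.mem_coe, Set.mem_setOf_eq,
          hmem_b, hmem_s]
        omega
      · rw [Finset.card_union_of_disjoint, hbcard, hscard]
        · show 3 * 2 ^ m - 2 + 3 * 2 ^ m = 3 * 2 ^ (m + 1) - 2
          have h1 : 1 ≤ 2 ^ m := Nat.one_le_two_pow
          rw [pow_succ]
          omega
        · rw [Finset.disjoint_left]
          intro q hq hq2
          rw [hmem_b] at hq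
          rw [hmem_s] at hq2
          omega

end SubtreeGrowthAux

/- STATEMENT 2: The subtree T of the 3-regular tree T₃ induced on
   {u : ∃ N, ∀ n ≥ N, d(u, vₙ) ≤ n} has exponential growth: there are a > 1
   and c > 0 with c·aʳ ≤ |B(v₀,r) ∩ T| ≤ aʳ/c for all sufficiently large r,
   where B(v₀,r) is the combinatorial ball of radius r about v₀. -/
theorem subtree_exponential_growth
    {V : Type*} (G : SimpleGraph V) [G.LocallyFinite]
    (htree : G.IsTree) (hdeg : ∀ x : V, G.degree x = 3)
    (v : ℕ → V) (hvinj : Function.Injective v)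
    (hvadj : ∀ n : ℕ, G.Adj (v n) (v (n + 1)))
    (S : Set V) (hS : S = {u : V | ∃ N : ℕ, ∀ n ≥ N, G.dist u (v n) ≤ n}) :
    ∃ a : ℝ, 1 < a ∧ ∃ c : ℝ, 0 < c ∧ ∀ᶠ r : ℕ in Filter.atTop,
      c * a ^ r ≤ ({u ∈ S | G.dist (v 0) u ≤ r}.ncard : ℝ) ∧
      ({u ∈ S | G.dist (v 0) u ≤ r}.ncard : ℝ) ≤ a ^ r / c := by
  classical
  have hconn := htree.isConnected
  have ha2 : (0:ℝ) ≤ 2 := by norm_num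
  have hsqrt_sq : Real.sqrt 2 ^ 2 = 2 := Real.sq_sqrt ha2
  have hsqrt_nonneg : (0:ℝ) ≤ Real.sqrt 2 := Real.sqrt_nonneg 2
  have ha1 : (1:ℝ) < Real.sqrt 2 := by nlinarith
  have ha1' : (1:ℝ) ≤ Real.sqrt 2 := le_of_lt ha1
  have hale2 : Real.sqrt 2 ≤ 2 := by nlinarith
  have hsq : ∀ k : ℕ, Real.sqrt 2 ^ (2 * k) = 2 ^ k := by
    intro k
    rw [pow_mul, hsqrt_sq]
  refine ⟨Real.sqrt 2, ha1, 1/6, by norm_num, Filter.Eventually.of_forall fun r => ?_⟩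
  set m₁ := r / 2 with hm₁
  set m₂ := (r + 1) / 2 with hm₂
  obtain ⟨b₁, hb₁, hb₁card⟩ := SubtreeGrowthAux.ball_card htree hdeg (v m₁) m₁
  obtain ⟨b₂, hb₂, hb₂card⟩ := SubtreeGrowthAux.ball_card htree hdeg (v m₂) m₂
  set M := {u ∈ S | G.dist (v 0) u ≤ r} with hM
  have hray : ∀ i j : ℕ, i ≤ j → G.dist (v i) (v j) = j - i :=
    fun i j hij => SubtreeGrowthAux.ray_dist htree hvadj hvinj hij
  -- lower containment
  have hB₁M : (↑b₁ : Set V) ⊆ M := by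
    rw [hb₁]
    intro u hu
    rw [Set.mem_setOf_eq] at hu
    constructor
    · rw [hS, Set.mem_setOf_eq]
      refine ⟨m₁, fun n hn => ?_⟩
      have ht1 := hconn.dist_triangle (u := u) (v := v m₁) (w := v n)
      have ht2 : G.dist (v m₁) (v n) = n - m₁ := hray m₁ n hn
      have ht3 : G.dist u (v m₁) ≤ m₁ := by rw [SimpleGraph.dist_comm]; exact hu
      omega
    · show G.dist (v 0) u ≤ r
      have ht1 := hconn.dist_triangle (u := v 0) (v := v m₁) (w := u)
      have ht2 : G.dist (v 0) (v m₁) = m₁ := by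
        have := hray 0 m₁ (Nat.zero_le _)
        simpa using this
      omega
  -- upper containment
  have hMB₂ : M ⊆ (↑b₂ : Set V) := by
    rw [hb₂]
    rintro u ⟨huS, hur⟩
    rw [hS, Set.mem_setOf_eq] at huS
    obtain ⟨N, hN⟩ := huS
    set n := max N m₂ with hn
    have hm₂n : m₂ ≤ n := le_max_right _ _
    have h3 := SubtreeGrowthAux.three_point htree hvadj hvinj u hm₂n
    have hun : G.dist u (v n) ≤ n := hN n (le_max_left _ _)
    have hu0 : G.dist u (v 0) ≤ r := by rw [SimpleGraph.dist_comm]; exact hur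
    rw [Set.mem_setOf_eq, SimpleGraph.dist_comm]
    rcases h3 with h | h
    · omega
    · omega
  have hMfin : M.Finite := Set.Finite.subset b₂.finite_toSet hMB₂
  have hlow : (2:ℕ) ^ m₁ ≤ M.ncard := by
    have h1 : b₁.card ≤ M.ncard := by
      rw [← Set.ncard_coe_finset]
      exact Set.ncard_le_ncard hB₁M hMfin
    have h2 : 1 ≤ 2 ^ m₁ := Nat.one_le_two_pow
    omega
  have hhigh : M.ncard ≤ 3 * 2 ^ m₂ := by
    have h1 : M.ncard ≤ b₂.card := by
      rw [← Set.ncard_coe_finset]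
      exact Set.ncard_le_ncard hMB₂ b₂.finite_toSet
    omega
  constructor
  · calc (1/6 : ℝ) * Real.sqrt 2 ^ r
        ≤ 1/6 * Real.sqrt 2 ^ (2 * (m₁ + 1)) := by
          apply mul_le_mul_of_nonneg_left (pow_le_pow_right₀ ha1' (by omega)) (by norm_num)
      _ = 1/6 * 2 ^ (m₁ + 1) := by rw [hsq]
      _ ≤ 2 ^ m₁ := by
          have hp : (0:ℝ) < 2 ^ m₁ := by positivity
          rw [pow_succ]
          nlinarith
      _ ≤ (M.ncard : ℝ) := by exact_mod_cast hlow
  · calc (M.ncard : ℝ) ≤ 3 * 2 ^ m₂ := by exact_mod_cast hhigh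
      _ = 3 * Real.sqrt 2 ^ (2 * m₂) := by rw [hsq]
      _ ≤ 3 * Real.sqrt 2 ^ (r + 1) :=
          mul_le_mul_of_nonneg_left (pow_le_pow_right₀ ha1' (by omega)) (by norm_num)
      _ = 3 * Real.sqrt 2 * Real.sqrt 2 ^ r := by rw [pow_succ]; ring
      _ ≤ 6 * Real.sqrt 2 ^ r := by
          have hp : (0:ℝ) ≤ Real.sqrt 2 ^ r := by positivity
          nlinarith
      _ = Real.sqrt 2 ^ r / (1/6) := by ring
end

section
/- The tree T = {u ∈ T₃ : ∃ N, ∀ n ≥ N, d(u, vₙ) ≤ n}, viewed as an electrical network with unit conductances on edges, is recurrent: the effective resistance from v₀ to infinity is infinite. -/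
open scoped ENNReal

/- The Dirichlet energy of a function on the vertices of a graph with unit
conductances: (1/2)·Σ_{x~y} (f x − f y)². -/
open Classical in
noncomputable def dirichletEnergy {V : Type*} (G : SimpleGraph V) (f : V → ℝ) : ℝ≥0∞ :=
  (1 / 2) * ∑' p : V × V,
    if G.Adj p.1 p.2 then ENNReal.ofReal ((f p.1 - f p.2) ^ 2) else 0

/-- The effective conductance from a vertex `v₀` to infinity, by the Dirichlet
variational principle: the infimum of the energy over finitely supported unit
potentials at `v₀`. -/
noncomputable def effConductance {V : Type*} (G : SimpleGraph V) (v₀ : V) : ℝ≥0∞ :=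
  ⨅ f ∈ {f : V → ℝ | f v₀ = 1 ∧ (Function.support f).Finite}, dirichletEnergy G f

/-- The effective resistance from `v₀` to infinity is the reciprocal of the
effective conductance. -/
noncomputable def effResistance {V : Type*} (G : SimpleGraph V) (v₀ : V) : ℝ≥0∞ :=
  (effConductance G v₀)⁻¹

namespace SubtreeAux
open SimpleGraph

open SimpleGraph

variable {V : Type*} {G : SimpleGraph V}

/-- In a tree, every path realizes the distance between its endpoints. -/
lemma length_eq_dist (htree : G.IsTree) {a b : V} (p : G.Walk a b) (hp : p.IsPath) :
    p.length = G.dist a b := by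
  obtain ⟨q, hq⟩ := htree.isConnected.exists_walk_length_eq_dist a b
  have hqp : q.IsPath := q.isPath_of_length_eq_dist hq
  have h2 : (⟨p, hp⟩ : G.Path a b) = ⟨q, hqp⟩ := htree.IsAcyclic.path_unique _ _
  have h3 : p = q := by simpa using congrArg Subtype.val h2
  rw [h3, hq]

open Classical in
/-- Distances add along a vertex of a path in a tree. -/
lemma dist_add_of_mem (htree : G.IsTree) {a b w : V} (p : G.Walk a b) (hp : p.IsPath)
    (hw : w ∈ p.support) : G.dist a w + G.dist w b = G.dist a b := by
  have h1 : (p.takeUntil w hw).append (p.dropUntil w hw) = p := p.take_spec hw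
  have hlen : (p.takeUntil w hw).length + (p.dropUntil w hw).length = p.length := by
    rw [← Walk.length_append, h1]
  have ht : G.dist a w ≤ (p.takeUntil w hw).length := dist_le _
  have hd : G.dist w b ≤ (p.dropUntil w hw).length := dist_le _
  have htr : G.dist a b ≤ G.dist a w + G.dist w b := htree.isConnected.dist_triangle
  have hpl : p.length = G.dist a b := length_eq_dist htree p hp
  omega

/-- In a tree, of two adjacent vertices, the farther one from `u` is exactly one
farther. -/
lemma dist_succ_of_le (htree : G.IsTree) {x y u : V} (hxy : G.Adj x y)
    (h : G.dist u x ≤ G.dist u y) : G.dist u y = G.dist u x + 1 := by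
  obtain ⟨p, hplen⟩ := htree.isConnected.exists_walk_length_eq_dist u x
  have hp : p.IsPath := p.isPath_of_length_eq_dist hplen
  by_cases hy : y ∈ p.support
  · have hsplit := dist_add_of_mem htree p hp hy
    have h1 : G.dist y x = 1 := dist_eq_one_iff_adj.mpr hxy.symm
    omega
  · have hq : (Walk.cons hxy.symm p.reverse).IsPath := by
      refine hp.reverse.cons ?_
      rwa [Walk.support_reverse, List.mem_reverse]
    have := length_eq_dist htree (Walk.cons hxy.symm p.reverse).reverse hq.reverse
    rw [Walk.length_reverse, Walk.length_cons, Walk.length_reverse, hplen] at this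
    omega

/-- In a tree, if `s` is on the `x`-side of the edge `xy` and `t` on the `y`-side,
the geodesic from `s` to `t` crosses the edge. -/
lemma dist_through_edge (htree : G.IsTree) {x y s t : V} (hxy : G.Adj x y)
    (hs : G.dist s y = G.dist s x + 1) (ht : G.dist t x = G.dist t y + 1) :
    G.dist s t = G.dist s x + 1 + G.dist y t := by
  obtain ⟨p, hplen⟩ := htree.isConnected.exists_walk_length_eq_dist s x
  have hp : p.IsPath := p.isPath_of_length_eq_dist hplen
  obtain ⟨q, hqlen⟩ := htree.isConnected.exists_walk_length_eq_dist y t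
  have hq : q.IsPath := q.isPath_of_length_eq_dist hqlen
  have hxq : x ∉ q.support := by
    intro hxs
    have := dist_add_of_mem htree q hq hxs
    have h1 : G.dist y x = 1 := dist_eq_one_iff_adj.mpr hxy.symm
    have h2 : G.dist x t = G.dist t x := dist_comm ..
    have h3 : G.dist y t = G.dist t y := dist_comm ..
    omega
  have hR : (Walk.cons hxy q).IsPath := hq.cons hxq
  have hW : (p.append (Walk.cons hxy q)).IsPath := by
    rw [Walk.isPath_def, Walk.support_append]
    have hpn : p.support.Nodup := hp.support_nodup
    have hRn := hR.support_nodup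
    rw [Walk.support_cons] at hRn
    refine List.Nodup.append hpn ((List.nodup_cons.mp hRn).2) ?_
    intro w hwp hwq
    rw [Walk.support_cons, List.tail_cons] at hwq
    have hsp := dist_add_of_mem htree p hp hwp
    have hsq := dist_add_of_mem htree q hq hwq
    rcases le_total (G.dist w x) (G.dist w y) with hle | hle
    · have hxy1 := dist_succ_of_le htree hxy hle
      have htr : G.dist x t ≤ G.dist x w + G.dist w t := htree.isConnected.dist_triangle
      have e1 : G.dist x w = G.dist w x := dist_comm ..
      have e2 : G.dist y w = G.dist w y := dist_comm ..
      have e3 : G.dist x t = G.dist t x := dist_comm ..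
      have e4 : G.dist y t = G.dist t y := dist_comm ..
      omega
    · have hxy1 := dist_succ_of_le htree hxy.symm hle
      have htr : G.dist s y ≤ G.dist s w + G.dist w y := htree.isConnected.dist_triangle
      have e2 : G.dist y w = G.dist w y := dist_comm ..
      omega
  have := length_eq_dist htree _ hW
  rw [Walk.length_append, Walk.length_cons, hplen, hqlen] at this
  omega

section Ray
variable {v : ℕ → V}

/-- The walk along the ray from `v a` to `v (a+i)`. -/
def rayWalk (hvadj : ∀ n : ℕ, G.Adj (v n) (v (n + 1))) (a : ℕ) : (i : ℕ) → G.Walk (v a) (v (a + i))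
  | 0 => Walk.nil
  | (i+1) => (rayWalk hvadj a i).concat (hvadj (a + i))

lemma rayWalk_support (hvadj : ∀ n : ℕ, G.Adj (v n) (v (n + 1))) (a : ℕ) :
    ∀ i, (rayWalk (G := G) hvadj a i).support = (List.range (i + 1)).map (fun j => v (a + j)) := by
  intro i
  induction i with
  | zero => simp [rayWalk, List.range_succ]
  | succ i ih =>
      rw [rayWalk, Walk.support_concat, ih, List.range_succ (n := i + 1)]
      simp [List.concat_eq_append]

lemma rayWalk_length (hvadj : ∀ n : ℕ, G.Adj (v n) (v (n + 1))) (a : ℕ) :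
    ∀ i, (rayWalk (G := G) hvadj a i).length = i := by
  intro i
  induction i with
  | zero => rfl
  | succ i ih => rw [rayWalk, Walk.length_concat, ih]

lemma dist_ray (htree : G.IsTree) (hvinj : Function.Injective v)
    (hvadj : ∀ n : ℕ, G.Adj (v n) (v (n + 1))) (a i : ℕ) :
    G.dist (v a) (v (a + i)) = i := by
  have hpath : (rayWalk (G := G) hvadj a i).IsPath := by
    rw [Walk.isPath_def, rayWalk_support]
    refine List.Nodup.map ?_ List.nodup_range
    intro x y hxy
    have := hvinj hxy
    omega
  rw [← length_eq_dist htree _ hpath, rayWalk_length]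

lemma dist_ray' (htree : G.IsTree) (hvinj : Function.Injective v)
    (hvadj : ∀ n : ℕ, G.Adj (v n) (v (n + 1))) {a b : ℕ} (hab : a ≤ b) :
    G.dist (v a) (v b) = b - a := by
  obtain ⟨i, rfl⟩ := Nat.exists_eq_add_of_le hab
  rw [dist_ray htree hvinj hvadj]
  omega

lemma exists_incr (htree : G.IsTree) (hvadj : ∀ n : ℕ, G.Adj (v n) (v (n + 1))) (u : V) :
    ∃ n, G.dist u (v (n + 1)) = G.dist u (v n) + 1 := by
  by_contra hc
  push_neg at hc
  have hdec : ∀ n, G.dist u (v n) = G.dist u (v (n + 1)) + 1 := by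
    intro n
    rcases le_total (G.dist u (v n)) (G.dist u (v (n + 1))) with h | h
    · exact absurd (dist_succ_of_le htree (hvadj n) h) (hc n)
    · exact dist_succ_of_le htree (hvadj n).symm h
  have hsum : ∀ n, G.dist u (v n) + n = G.dist u (v 0) := by
    intro n
    induction n with
    | zero => rfl
    | succ n ih => have := hdec n; omega
  have := hsum (G.dist u (v 0) + 1)
  omega

/-- once the distance to the ray increases, it keeps increasing -/
lemma step_up (htree : G.IsTree) (hvinj : Function.Injective v)
    (hvadj : ∀ n : ℕ, G.Adj (v n) (v (n + 1))) {u : V} {n : ℕ}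
    (h : G.dist u (v (n + 1)) = G.dist u (v n) + 1) :
    G.dist u (v (n + 2)) = G.dist u (v (n + 1)) + 1 := by
  by_contra hc
  have hdec : G.dist u (v (n + 1)) = G.dist u (v (n + 2)) + 1 := by
    rcases le_total (G.dist u (v (n + 1))) (G.dist u (v (n + 2))) with h' | h'
    · exact absurd (dist_succ_of_le htree (hvadj (n + 1)) h') hc
    · exact dist_succ_of_le htree (hvadj (n + 1)).symm h'
  have ht : G.dist (v (n + 2)) (v n) = G.dist (v (n + 2)) (v (n + 1)) + 1 := by
    rw [dist_comm, dist_ray htree hvinj hvadj n 2, dist_comm,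
      dist_ray htree hvinj hvadj (n + 1) 1]
  have := dist_through_edge htree (hvadj n) h ht
  rw [dist_ray htree hvinj hvadj (n + 1) 1] at this
  omega

lemma incr_after (htree : G.IsTree) (hvinj : Function.Injective v)
    (hvadj : ∀ n : ℕ, G.Adj (v n) (v (n + 1))) {u : V} {M : ℕ}
    (hM : G.dist u (v (M + 1)) = G.dist u (v M) + 1) (i : ℕ) :
    G.dist u (v (M + i)) = G.dist u (v M) + i := by
  have haux : ∀ i, G.dist u (v (M + i + 1)) = G.dist u (v (M + i)) + 1 := by
    intro i
    induction i with
    | zero => exact hM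
    | succ i ih => exact step_up htree hvinj hvadj ih
  induction i with
  | zero => rfl
  | succ i ih =>
      have h1 := haux i
      have h3 : M + (i + 1) = M + i + 1 := by omega
      rw [h3]
      omega

lemma decr_below (htree : G.IsTree) (hvadj : ∀ n : ℕ, G.Adj (v n) (v (n + 1))) {u : V} {M : ℕ}
    (hmin : ∀ j < M, ¬ (G.dist u (v (j + 1)) = G.dist u (v j) + 1)) :
    ∀ i ≤ M, G.dist u (v (M - i)) = G.dist u (v M) + i := by
  have hdec : ∀ j < M, G.dist u (v j) = G.dist u (v (j + 1)) + 1 := by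
    intro j hj
    rcases le_total (G.dist u (v j)) (G.dist u (v (j + 1))) with h | h
    · exact absurd (dist_succ_of_le htree (hvadj j) h) (hmin j hj)
    · exact dist_succ_of_le htree (hvadj j).symm h
  intro i
  induction i with
  | zero => intro _; rfl
  | succ i ih =>
      intro hi
      have h1 := hdec (M - (i + 1)) (by omega)
      have h2 := ih (by omega)
      have h3 : M - (i + 1) + 1 = M - i := by omega
      rw [h3] at h1
      omega
end Ray

/-- balls in a connected locally finite graph are finite -/
lemma ball_finite (G : SimpleGraph V) [G.LocallyFinite] (hconn : G.Connected) (w : V) :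
    ∀ r : ℕ, {x : V | G.dist x w ≤ r}.Finite := by
  intro r
  induction r with
  | zero =>
      refine Set.Finite.subset (Set.finite_singleton w) ?_
      intro x hx
      simp only [Set.mem_setOf_eq, Nat.le_zero] at hx
      simp [hconn.dist_eq_zero_iff.mp hx]
  | succ r ih =>
      refine Set.Finite.subset (ih.union (Set.Finite.biUnion ih
        (fun x _ => (G.neighborSet x).toFinite))) ?_
      intro x hx
      simp only [Set.mem_setOf_eq] at hx
      rcases Nat.lt_or_ge (G.dist x w) (r + 1) with h | h
      · exact Or.inl (by simpa using Nat.lt_succ_iff.mp h)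
      · have hd : G.dist x w = r + 1 := le_antisymm hx h
        obtain ⟨p, hp⟩ := (hconn x w).exists_walk_length_eq_dist
        cases p with
        | nil => rw [← hp] at hd; simp at hd
        | @cons _ y _ hadj q =>
            right
            refine Set.mem_biUnion (show G.dist y w ≤ r from ?_) hadj.symm
            have := dist_le q
            rw [Walk.length_cons] at hp
            omega

end SubtreeAux

/- STATEMENT 3: The subtree T of the 3-regular tree induced on
   {u : ∃ N, ∀ n ≥ N, d(u, vₙ) ≤ n}, as an electrical network with unit
   conductances, is recurrent: the effective resistance from v₀ to infinity
   is infinite. -/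
theorem subtree_recurrent
    {V : Type*} (G : SimpleGraph V) [G.LocallyFinite]
    (htree : G.IsTree) (hdeg : ∀ x : V, G.degree x = 3)
    (v : ℕ → V) (hvinj : Function.Injective v)
    (hvadj : ∀ n : ℕ, G.Adj (v n) (v (n + 1)))
    (S : Set V) (hS : S = {u : V | ∃ N : ℕ, ∀ n ≥ N, G.dist u (v n) ≤ n})
    (h0 : v 0 ∈ S) :
    effResistance (G.induce S) ⟨v 0, h0⟩ = ⊤ := by
  classical
  have hconn := htree.isConnected
  have hex : ∀ u : V, ∃ n, G.dist u (v (n + 1)) = G.dist u (v n) + 1 :=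
    SubtreeAux.exists_incr htree hvadj
  let m : V → ℕ := fun u => Nat.find (hex u)
  have hmspec : ∀ u, G.dist u (v (m u + 1)) = G.dist u (v (m u)) + 1 :=
    fun u => Nat.find_spec (hex u)
  have hmmin : ∀ u, ∀ j < m u, ¬ (G.dist u (v (j + 1)) = G.dist u (v j) + 1) :=
    fun u j hj => Nat.find_min (hex u) hj
  have hG1 : ∀ u (i : ℕ), G.dist u (v (m u + i)) = G.dist u (v (m u)) + i :=
    fun u i => SubtreeAux.incr_after htree hvinj hvadj (hmspec u) i
  have hG2 : ∀ u, ∀ i ≤ m u, G.dist u (v (m u - i)) = G.dist u (v (m u)) + i :=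
    fun u => SubtreeAux.decr_below htree hvadj (hmmin u)
  have hD : ∀ u, G.dist u (v 0) = G.dist u (v (m u)) + m u := by
    intro u
    have := hG2 u (m u) le_rfl
    rwa [Nat.sub_self] at this
  have hmv : ∀ i, m (v i) = i := by
    intro i
    show Nat.find (hex (v i)) = i
    rw [Nat.find_eq_iff]
    constructor
    · have h1 : G.dist (v i) (v (i + 1)) = 1 :=
        SubtreeAux.dist_ray htree hvinj hvadj i 1
      have h2 : G.dist (v i) (v i) = 0 := SimpleGraph.dist_self
      omega
    · intro j hj
      have h1 : G.dist (v i) (v (j + 1)) = i - (j + 1) := by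
        rw [SimpleGraph.dist_comm]
        exact SubtreeAux.dist_ray' htree hvinj hvadj (by omega)
      have h2 : G.dist (v i) (v j) = i - j := by
        rw [SimpleGraph.dist_comm]
        exact SubtreeAux.dist_ray' htree hvinj hvadj (by omega)
      omega
  have hvS : ∀ n : ℕ, v n ∈ S := by
    intro n
    rw [hS]
    refine ⟨n, fun n' hn' => ?_⟩
    rw [SubtreeAux.dist_ray' htree hvinj hvadj hn']
    omega
  have hkS : ∀ u : V, u ∈ S → G.dist u (v (m u)) ≤ m u := by
    intro u hu
    rw [hS] at hu
    obtain ⟨N₀, hN₀⟩ := hu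
    have h1 := hN₀ (max N₀ (m u)) (le_max_left _ _)
    have h2 : G.dist u (v (max N₀ (m u))) = G.dist u (v (m u)) + (max N₀ (m u) - m u) := by
      have := hG1 u (max N₀ (m u) - m u)
      rwa [show m u + (max N₀ (m u) - m u) = max N₀ (m u) by omega] at this
    omega
  -- classification of edges
  have hside : ∀ u u' : V, G.Adj u u' → G.dist u' (v 0) = G.dist u (v 0) + 1 →
      (m u' = m u ∨ (u = v (m u) ∧ u' = v (m u + 1))) := by
    intro u u' hadj h0'
    have hju : G.dist u (v (m u + m u')) = G.dist u (v (m u)) + m u' := hG1 u (m u')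
    have hju' : G.dist u' (v (m u + m u')) = G.dist u' (v (m u')) + m u := by
      have := hG1 u' (m u)
      rwa [show m u' + m u = m u + m u' by omega] at this
    have e0 : G.dist u' (v (m u')) + m u' = G.dist u (v (m u)) + m u + 1 := by
      rw [hD u, hD u'] at h0'
      omega
    have c1 : G.dist (v (m u + m u')) u = G.dist u (v (m u + m u')) := SimpleGraph.dist_comm ..
    have c2 : G.dist (v (m u + m u')) u' = G.dist u' (v (m u + m u')) := SimpleGraph.dist_comm ..
    rcases le_total (G.dist (v (m u + m u')) u) (G.dist (v (m u + m u')) u') with hle | hle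
    · have hstep := SubtreeAux.dist_succ_of_le htree hadj hle
      left
      omega
    · have hstep := SubtreeAux.dist_succ_of_le htree hadj.symm hle
      have hm' : m u' = m u + 1 := by omega
      have hk' : G.dist u' (v (m u')) = G.dist u (v (m u)) := by omega
      -- apply the crossing lemma
      have hs : G.dist (v (m u)) u' = G.dist (v (m u)) u + 1 := by
        have h1 : G.dist u' (v (m u' - 1)) = G.dist u' (v (m u')) + 1 := hG2 u' 1 (by omega)
        rw [show m u' - 1 = m u by omega] at h1
        rw [SimpleGraph.dist_comm, h1, hk', SimpleGraph.dist_comm]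
      have ht : G.dist (v (m u + 1)) u = G.dist (v (m u + 1)) u' + 1 := by
        have h1 : G.dist u (v (m u + 1)) = G.dist u (v (m u)) + 1 := hG1 u 1
        have h2 : G.dist u' (v (m u + 1)) = G.dist u (v (m u)) := by
          rw [show m u + 1 = m u' from hm'.symm]
          exact hk'
        rw [SimpleGraph.dist_comm, h1, SimpleGraph.dist_comm (u := v (m u + 1)), h2]
      have hcross := SubtreeAux.dist_through_edge htree hadj hs ht
      rw [SubtreeAux.dist_ray htree hvinj hvadj (m u) 1] at hcross
      have hk0 : G.dist (v (m u)) u = 0 := by omega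
      have hk0' : G.dist u' (v (m u + 1)) = 0 := by omega
      right
      constructor
      · rw [SimpleGraph.dist_comm] at hk0
        exact hconn.dist_eq_zero_iff.mp hk0
      · exact (hconn.dist_eq_zero_iff.mp hk0')
  have hclass : ∀ u u' : V, G.Adj u u' →
      (m u = m u' ∨ (∃ n, u = v n ∧ u' = v (n + 1)) ∨ (∃ n, u' = v n ∧ u = v (n + 1))) := by
    intro u u' hadj
    rcases le_total (G.dist (v 0) u) (G.dist (v 0) u') with hle | hle
    · have h1 := SubtreeAux.dist_succ_of_le htree hadj hle
      have h1' : G.dist u' (v 0) = G.dist u (v 0) + 1 := by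
        rw [SimpleGraph.dist_comm, h1, SimpleGraph.dist_comm (u := v 0)]
      rcases hside u u' hadj h1' with h | h
      · exact Or.inl h.symm
      · exact Or.inr (Or.inl ⟨m u, h.1, h.2⟩)
    · have h1 := SubtreeAux.dist_succ_of_le htree hadj.symm hle
      have h1' : G.dist u (v 0) = G.dist u' (v 0) + 1 := by
        rw [SimpleGraph.dist_comm, h1, SimpleGraph.dist_comm (u := v 0)]
      rcases hside u' u hadj.symm h1' with h | h
      · exact Or.inl h
      · exact Or.inr (Or.inr ⟨m u', h.1, h.2⟩)
  -- main estimate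
  suffices hcond : effConductance (G.induce S) ⟨v 0, h0⟩ = 0 by
    rw [effResistance, hcond]
    simp
  have key : ∀ N : ℕ, effConductance (G.induce S) ⟨v 0, h0⟩ ≤ ENNReal.ofReal (1 / (N + 1)) := by
    intro N
    have hN1 : (0 : ℝ) < (N : ℝ) + 1 := by positivity
    set g : ℕ → ℝ := fun n => max 0 (1 - (n : ℝ) / ((N : ℝ) + 1)) with hg_def
    set f : ↥S → ℝ := fun u => g (m u.val) with hf_def
    have hf1 : f ⟨v 0, h0⟩ = 1 := by
      show g (m (v 0)) = 1
      rw [hmv 0]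
      show max 0 (1 - (0 : ℕ) / ((N : ℝ) + 1)) = 1
      norm_num
    have hsupp : (Function.support f).Finite := by
      have hball := SubtreeAux.ball_finite G hconn (v 0) (2 * N)
      refine Set.Finite.subset (hball.preimage (Subtype.val_injective.injOn)) ?_
      intro u hu
      simp only [Function.mem_support] at hu
      have hgn : m u.val ≤ N := by
        by_contra hgt
        apply hu
        show g (m u.val) = 0
        apply max_eq_left
        rw [sub_nonpos]
        rw [le_div_iff₀ hN1, one_mul]
        have : (N : ℝ) + 1 ≤ (m u.val : ℝ) := by exact_mod_cast Nat.succ_le_of_lt (by omega)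
        linarith
      have h1 := hkS u.val u.property
      have h2 := hD u.val
      simp only [Set.mem_preimage, Set.mem_setOf_eq]
      omega
    have hmem : f ∈ {f : ↥S → ℝ | f ⟨v 0, h0⟩ = 1 ∧ (Function.support f).Finite} :=
      ⟨hf1, hsupp⟩
    have hle1 : effConductance (G.induce S) ⟨v 0, h0⟩ ≤ dirichletEnergy (G.induce S) f := by
      rw [effConductance]
      exact iInf₂_le f hmem
    refine le_trans hle1 ?_
    -- energy of f is at most 1/(N+1)
    set c : ℝ≥0∞ := ENNReal.ofReal (((1 : ℝ) / ((N : ℝ) + 1)) ^ 2) with hc_def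
    set P₁ : ℕ → ↥S × ↥S := fun n => (⟨v n, hvS n⟩, ⟨v (n + 1), hvS (n + 1)⟩) with hP1
    set P₂ : ℕ → ↥S × ↥S := fun n => (⟨v (n + 1), hvS (n + 1)⟩, ⟨v n, hvS n⟩) with hP2
    have hgzero : ∀ n : ℕ, N + 1 ≤ n → g n = 0 := by
      intro n hn
      apply max_eq_left
      rw [sub_nonpos]
      rw [le_div_iff₀ hN1, one_mul]
      exact_mod_cast hn
    have hgdiff : ∀ n : ℕ, (g n - g (n + 1)) ^ 2 ≤ ((1 : ℝ) / ((N : ℝ) + 1)) ^ 2 := by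
      intro n
      have h1 : |g n - g (n + 1)| ≤
          |(1 - (n : ℝ) / ((N : ℝ) + 1)) - (1 - ((n + 1 : ℕ) : ℝ) / ((N : ℝ) + 1))| := by
        show |max 0 _ - max 0 _| ≤ _
        rw [max_comm 0 (1 - (n : ℝ) / ((N : ℝ) + 1)), max_comm 0 (1 - ((n + 1 : ℕ) : ℝ) / ((N : ℝ) + 1))]
        exact abs_max_sub_max_le_abs _ _ 0
      have h2 : (1 - (n : ℝ) / ((N : ℝ) + 1)) - (1 - ((n + 1 : ℕ) : ℝ) / ((N : ℝ) + 1)) =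
          1 / ((N : ℝ) + 1) := by
        push_cast
        field_simp
        ring
      rw [h2] at h1
      have h3 : |g n - g (n + 1)| ≤ 1 / ((N : ℝ) + 1) := by
        refine h1.trans (le_of_eq (abs_of_nonneg (by positivity)))
      calc (g n - g (n + 1)) ^ 2 = |g n - g (n + 1)| ^ 2 := (sq_abs _).symm
        _ ≤ ((1 : ℝ) / ((N : ℝ) + 1)) ^ 2 := pow_le_pow_left₀ (abs_nonneg _) h3 2
    have hpoint : ∀ p : ↥S × ↥S,
        (if (G.induce S).Adj p.1 p.2 then ENNReal.ofReal ((f p.1 - f p.2) ^ 2) else 0) ≤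
        ∑ n ∈ Finset.range (N + 1),
          ((if p = P₁ n then c else 0) + (if p = P₂ n then c else 0)) := by
      rintro ⟨u, u'⟩
      by_cases hadj : (G.induce S).Adj u u'
      swap
      · rw [if_neg hadj]; exact zero_le
      rw [if_pos hadj]
      have hGadj : G.Adj u.val u'.val := hadj
      have hterm : ∀ n : ℕ, n < N + 1 → ∀ q : ↥S × ↥S, (q = P₁ n ∨ q = P₂ n) →
          c ≤ ∑ n ∈ Finset.range (N + 1),
            ((if q = P₁ n then c else 0) + (if q = P₂ n then c else 0)) := by
        intro n hn q hq
        refine le_trans ?_ (Finset.single_le_sum (f := fun i =>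
          ((if q = P₁ i then c else 0) + (if q = P₂ i then c else 0)))
          (fun i _ => zero_le) (Finset.mem_range.mpr hn))
        show c ≤ (if q = P₁ n then c else 0) + (if q = P₂ n then c else 0)
        rcases hq with hq | hq
        · rw [if_pos hq]; exact self_le_add_right _ _
        · rw [if_pos hq]; exact self_le_add_left _ _
      rcases hclass u.val u'.val hGadj with heq | ⟨n, h1, h2⟩ | ⟨n, h1, h2⟩
      · have hfe : f u = f u' := by
          show g (m u.val) = g (m u'.val)
          rw [heq]
        rw [hfe, sub_self]
        simpa using zero_le
      · have hfu : f u = g n := by show g (m u.val) = g n; rw [h1, hmv n]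
        have hfu' : f u' = g (n + 1) := by show g (m u'.val) = g (n + 1); rw [h2, hmv (n + 1)]
        by_cases hn : n < N + 1
        · have hpp : ((u, u') : ↥S × ↥S) = P₁ n :=
            Prod.ext (Subtype.ext h1) (Subtype.ext h2)
          refine le_trans ?_ (hterm n hn (u, u') (Or.inl hpp))
          rw [hfu, hfu', hc_def]
          exact ENNReal.ofReal_le_ofReal (hgdiff n)
        · rw [hfu, hfu', hgzero n (by omega), hgzero (n + 1) (by omega), sub_self]
          simpa using zero_le
      · have hfu : f u = g (n + 1) := by show g (m u.val) = g (n + 1); rw [h2, hmv (n + 1)]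
        have hfu' : f u' = g n := by show g (m u'.val) = g n; rw [h1, hmv n]
        by_cases hn : n < N + 1
        · have hpp : ((u, u') : ↥S × ↥S) = P₂ n :=
            Prod.ext (Subtype.ext h2) (Subtype.ext h1)
          refine le_trans ?_ (hterm n hn (u, u') (Or.inr hpp))
          rw [hfu, hfu', hc_def]
          have := hgdiff n
          have habs : (g (n + 1) - g n) ^ 2 = (g n - g (n + 1)) ^ 2 := by ring
          rw [habs]
          exact ENNReal.ofReal_le_ofReal (hgdiff n)
        · rw [hfu, hfu', hgzero n (by omega), hgzero (n + 1) (by omega), sub_self]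
          simpa using zero_le
    calc dirichletEnergy (G.induce S) f
        = 1 / 2 * ∑' p : ↥S × ↥S,
            (if (G.induce S).Adj p.1 p.2 then ENNReal.ofReal ((f p.1 - f p.2) ^ 2) else 0) := rfl
      _ ≤ 1 / 2 * ∑' p : ↥S × ↥S, ∑ n ∈ Finset.range (N + 1),
            ((if p = P₁ n then c else 0) + (if p = P₂ n then c else 0)) :=
          mul_le_mul_right (ENNReal.tsum_le_tsum hpoint) _
      _ = 1 / 2 * ∑ n ∈ Finset.range (N + 1), (c + c) := by
          congr 1
          exact (hasSum_sum (fun n _ =>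
            ((hasSum_ite_eq (P₁ n) c).add (hasSum_ite_eq (P₂ n) c)))).tsum_eq
      _ ≤ ENNReal.ofReal (1 / (N + 1)) := by
          rw [Finset.sum_const, Finset.card_range, nsmul_eq_mul, hc_def]
          rw [← ENNReal.ofReal_add (by positivity) (by positivity)]
          rw [show ((N + 1 : ℕ) : ℝ≥0∞) = ENNReal.ofReal ((N + 1 : ℕ) : ℝ) from
            (ENNReal.ofReal_natCast _).symm]
          rw [← ENNReal.ofReal_mul (by positivity)]
          rw [show (1 / 2 : ℝ≥0∞) = ENNReal.ofReal (1 / 2) by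
            rw [ENNReal.ofReal_div_of_pos (by norm_num), ENNReal.ofReal_one,
              ENNReal.ofReal_ofNat]]
          rw [← ENNReal.ofReal_mul (by norm_num)]
          apply ENNReal.ofReal_le_ofReal
          apply le_of_eq
          push_cast
          field_simp
          ring
  refine le_antisymm ?_ zero_le
  have htend : Filter.Tendsto (fun N : ℕ => ENNReal.ofReal (1 / (N + 1)))
      Filter.atTop (nhds 0) := by
    rw [show (0 : ℝ≥0∞) = ENNReal.ofReal 0 from ENNReal.ofReal_zero.symm]
    exact ENNReal.tendsto_ofReal tendsto_one_div_add_atTop_nhds_zero_nat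
  exact ge_of_tendsto' htend key
end

section
/- Let Y be the plane ℝ² with metric |dz|/y on P = {y ≥ 1} and e^{1−y}|dz| on Q = {y < 1}, with a = i and β = {y = 1}. Then for all sufficiently large r, area(P ∩ D(a, r)) ≥ c·length(β_r) for some constant c > 0, where β_r = β ∩ D(a, r), D(a, r) is the open metric ball of radius r about a in Y, and area and length are with respect to the metric of Y. -/
open MeasureTheory

/-- The conformal factor of the surface Y: λ = 1/y on P = {y ≥ 1} and
λ = e^{1−y} on Q = {y < 1}. -/
noncomputable def lam (z : ℂ) : ℝ :=
  if 1 ≤ z.im then 1 / z.im else Real.exp (1 - z.im)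

/-- Length of a path in the metric λ|dz| of Y. -/
noncomputable def pathLen (γ : ℝ → ℂ) : ℝ :=
  ∫ t in (0:ℝ)..1, lam (γ t) * ‖deriv γ t‖

/-- The length metric of Y: infimum of lengths of C¹ paths joining p to q. -/
noncomputable def Ydist (p q : ℂ) : ℝ :=
  sInf {L : ℝ | ∃ γ : ℝ → ℂ, ContDiff ℝ 1 γ ∧ γ 0 = p ∧ γ 1 = q ∧ L = pathLen γ}

/-- Area of a subset of Y, with area element λ² dx dy. -/
noncomputable def Yarea (S : Set ℂ) : ℝ :=
  ∫ z in S, (lam z) ^ 2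

/-- The open metric ball D(a, r) of Y about the basepoint a = i. -/
def Dball (r : ℝ) : Set ℂ := {z : ℂ | Ydist Complex.I z < r}

/-- The length of β_r = β ∩ D(a, r), where β = {y = 1}; since λ = 1 on β this
is the Lebesgue measure of the corresponding set of abscissas. -/
noncomputable def lenBeta (r : ℝ) : ℝ :=
  (volume {x : ℝ | Ydist Complex.I ((x : ℂ) + Complex.I) < r}).toReal

/-- The intrinsic metric of Q ∪ β = {y ≤ 1} with the flat metric e^{1−y}|dz|:
infimum of lengths of C¹ paths staying in {y ≤ 1}. -/
noncomputable def dQ (p q : ℂ) : ℝ :=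
  sInf {L : ℝ | ∃ γ : ℝ → ℂ, ContDiff ℝ 1 γ ∧ (∀ t, (γ t).im ≤ 1) ∧
    γ 0 = p ∧ γ 1 = q ∧
    L = ∫ t in (0:ℝ)..1, Real.exp (1 - (γ t).im) * ‖deriv γ t‖}

/-- The nearest-point projection of p ∈ Q onto β = {y = 1} (the point of β
closest to p, namely the vertical projection p′ = Re p + i). -/
noncomputable def projBeta (p : ℂ) : ℂ := (p.re : ℂ) + Complex.I

/-! Auxiliary: the function φ -/

noncomputable def phi (y : ℝ) : ℝ := Real.log (2 + Real.exp y)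

lemma two_add_exp_pos (y : ℝ) : (0:ℝ) < 2 + Real.exp y := by positivity

lemma phi_pos (y : ℝ) : 0 < phi y :=
  Real.log_pos (by have := Real.exp_pos y; linarith)

lemma lt_phi (y : ℝ) : y < phi y := by
  have h := Real.exp_pos y
  calc y = Real.log (Real.exp y) := (Real.log_exp y).symm
    _ < phi y := Real.log_lt_log (Real.exp_pos y) (by linarith)

lemma hasDerivAt_phi (y : ℝ) :
    HasDerivAt phi (Real.exp y / (2 + Real.exp y)) y := by
  have h1 : HasDerivAt (fun y : ℝ => 2 + Real.exp y) (Real.exp y) y :=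
    (Real.hasDerivAt_exp y).const_add 2
  have h2 := (Real.hasDerivAt_log (two_add_exp_pos y).ne').comp y h1
  exact h2.congr_deriv (by rw [div_eq_inv_mul])

lemma continuous_phi : Continuous phi := by
  rw [continuous_iff_continuousAt]
  exact fun y => (hasDerivAt_phi y).continuousAt

lemma exp_le_phi {y : ℝ} (hy : y ≤ 1) : Real.exp (y - 1) ≤ phi y := by
  have hu : Real.exp y ≤ Real.exp 1 := Real.exp_le_exp.2 hy
  have hup : 0 < Real.exp y := Real.exp_pos y
  have he : (2:ℝ) < Real.exp 1 := by
    have := Real.exp_one_gt_d9; linarith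
  rw [Real.exp_sub]
  by_cases h : Real.exp 1 ≤ 2 + Real.exp y
  · have h1 : Real.exp y / Real.exp 1 ≤ 1 :=
      div_le_one_of_le₀ hu (Real.exp_pos 1).le
    have h2 : (1:ℝ) ≤ phi y := by
      have := Real.log_le_log (Real.exp_pos 1) h
      rwa [Real.log_exp] at this
    linarith
  · push_neg at h
    have he9 : Real.exp 1 < 2.7182818286 := Real.exp_one_lt_d9
    have hu1 : Real.exp y < 1 := by linarith
    have h1 : Real.exp y / Real.exp 1 < 1/2 := by
      rw [div_lt_iff₀ (Real.exp_pos 1)]; nlinarith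
    have hhalf : Real.exp (1/2 : ℝ) < 2 := by
      nlinarith [Real.exp_pos (1/2:ℝ), Real.exp_add (1/2:ℝ) (1/2:ℝ), sq_nonneg (Real.exp (1/2:ℝ) - 2)]
    have h2 : (1/2 : ℝ) ≤ Real.log 2 := by
      rw [Real.le_log_iff_exp_le (by norm_num : (0:ℝ) < 2)]
      exact hhalf.le
    have h3 : Real.log 2 ≤ phi y := by
      apply Real.log_le_log (by norm_num); linarith
    linarith

/-! lam basics -/

lemma lam_nonneg (z : ℂ) : 0 ≤ lam z := by
  unfold lam; split_ifs with h
  · exact div_nonneg one_pos.le (by linarith)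
  · exact (Real.exp_pos _).le

lemma inv_phi_le_lam (z : ℂ) : 1 / phi z.im ≤ lam z := by
  unfold lam; split_ifs with h
  · exact one_div_le_one_div_of_le (by linarith) (lt_phi z.im).le
  · push_neg at h
    have h3 : 1 / phi z.im ≤ 1 / Real.exp (z.im - 1) :=
      one_div_le_one_div_of_le (Real.exp_pos _) (exp_le_phi h.le)
    have h4 : Real.exp (1 - z.im) = 1 / Real.exp (z.im - 1) := by
      rw [one_div, ← Real.exp_neg]; congr 1; ring
    rw [h4]; exact h3

lemma continuous_lam : Continuous lam := by
  have heq : lam = fun z : ℂ =>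
      if 1 ≤ z.im then 1 / max z.im 1 else Real.exp (1 - z.im) := by
    funext z; unfold lam; split_ifs with h
    · rw [max_eq_left h]
    · rfl
  rw [heq]
  refine Continuous.if_le ?_ ?_ continuous_const Complex.continuous_im ?_
  · refine continuous_const.div (Complex.continuous_im.max continuous_const) ?_
    intro z
    have : (0:ℝ) < max z.im 1 := lt_of_lt_of_le one_pos (le_max_right _ _)
    exact this.ne'
  · exact Real.continuous_exp.comp (continuous_const.sub Complex.continuous_im)
  · intro z hz
    simp [← hz]

/-! The comparison function F and its derivative along paths -/

noncomputable def Fl (z : ℂ) : ℝ :=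
  Real.log (z.re ^ 2 + phi z.im ^ 2) - Real.log (phi z.im)

lemma Spos (z : ℂ) : 0 < z.re ^ 2 + phi z.im ^ 2 := by
  have := phi_pos z.im; positivity

noncomputable def Fd (γ : ℝ → ℂ) (t : ℝ) : ℝ :=
  (2 * (γ t).re * (deriv γ t).re
    + 2 * phi (γ t).im *
      (Real.exp (γ t).im / (2 + Real.exp (γ t).im) * (deriv γ t).im))
    / ((γ t).re ^ 2 + phi (γ t).im ^ 2)
  - Real.exp (γ t).im / (2 + Real.exp (γ t).im) * (deriv γ t).im / phi (γ t).im

lemma hasDerivAt_Fl_comp (γ : ℝ → ℂ) (hγ : Differentiable ℝ γ) (t : ℝ) :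
    HasDerivAt (fun s => Fl (γ s)) (Fd γ t) t := by
  have hd : HasDerivAt γ (deriv γ t) t := (hγ t).hasDerivAt
  have hu : HasDerivAt (fun s => (γ s).re) (deriv γ t).re t :=
    Complex.reCLM.hasFDerivAt.comp_hasDerivAt t hd
  have hv : HasDerivAt (fun s => (γ s).im) (deriv γ t).im t :=
    Complex.imCLM.hasFDerivAt.comp_hasDerivAt t hd
  have hphi : HasDerivAt (fun s => phi (γ s).im)
      (Real.exp (γ t).im / (2 + Real.exp (γ t).im) * (deriv γ t).im) t :=
    (hasDerivAt_phi _).comp t hv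
  have hg : HasDerivAt (fun s => (γ s).re ^ 2 + phi (γ s).im ^ 2)
      (2 * (γ t).re * (deriv γ t).re
        + 2 * phi (γ t).im *
          (Real.exp (γ t).im / (2 + Real.exp (γ t).im) * (deriv γ t).im)) t := by
    have h1 := hu.pow 2
    have h2 := hphi.pow 2
    refine (h1.add h2).congr_deriv ?_
    push_cast
    ring
  have hlog1 := (Real.hasDerivAt_log (Spos (γ t)).ne').comp t hg
  have hlog2 := (Real.hasDerivAt_log (phi_pos (γ t).im).ne').comp t hphi
  have h := hlog1.sub hlog2
  refine h.congr_deriv ?_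
  simp [Fd, div_eq_inv_mul]

lemma key_alg (u u' v' φ p n : ℝ) (hφ : 0 < φ) (hp0 : 0 ≤ p) (hp1 : p ≤ 1)
    (hn : 0 ≤ n) (hn2 : u' ^ 2 + v' ^ 2 ≤ n ^ 2) :
    (2 * u * u' + 2 * φ * (p * v')) / (u ^ 2 + φ ^ 2) - p * v' / φ ≤ 1 / φ * n := by
  set S := u ^ 2 + φ ^ 2 with hSdef
  have hS : 0 < S := by positivity
  have hp2 : p ^ 2 ≤ 1 := by nlinarith
  have h1 : (2 * φ * u * u' + p * v' * (φ ^ 2 - u ^ 2)) ^ 2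
      ≤ ((2 * φ * u) ^ 2 + (p * (φ ^ 2 - u ^ 2)) ^ 2) * (u' ^ 2 + v' ^ 2) := by
    nlinarith [sq_nonneg (2 * φ * u * v' - p * (φ ^ 2 - u ^ 2) * u')]
  have h2 : (2 * φ * u) ^ 2 + (p * (φ ^ 2 - u ^ 2)) ^ 2 ≤ S ^ 2 := by
    have := mul_nonneg (sub_nonneg.2 hp2) (sq_nonneg (φ ^ 2 - u ^ 2))
    nlinarith
  have h4 : (2 * φ * u * u' + p * v' * (φ ^ 2 - u ^ 2)) ^ 2 ≤ (n * S) ^ 2 := by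
    calc (2 * φ * u * u' + p * v' * (φ ^ 2 - u ^ 2)) ^ 2
        ≤ ((2 * φ * u) ^ 2 + (p * (φ ^ 2 - u ^ 2)) ^ 2) * (u' ^ 2 + v' ^ 2) := h1
      _ ≤ S ^ 2 * n ^ 2 := by
          apply mul_le_mul h2 hn2 (by positivity) (by positivity)
      _ = (n * S) ^ 2 := by ring
  have h3 : 2 * φ * u * u' + p * v' * (φ ^ 2 - u ^ 2) ≤ n * S := by
    nlinarith [h4, mul_nonneg hn hS.le]
  have hD : (2 * u * u' + 2 * φ * (p * v')) / S - p * v' / φ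
      = (2 * φ * u * u' + p * v' * (φ ^ 2 - u ^ 2)) / (S * φ) := by
    field_simp
    ring
  have hR : 1 / φ * n = (n * S) / (S * φ) := by
    field_simp
  rw [hD, hR]
  exact div_le_div_of_nonneg_right h3 (by positivity)

lemma norm_sq_complex (c : ℂ) : c.re ^ 2 + c.im ^ 2 = ‖c‖ ^ 2 := by
  rw [Complex.sq_norm, Complex.normSq_apply]; ring

lemma Fd_le (γ : ℝ → ℂ) (t : ℝ) : Fd γ t ≤ lam (γ t) * ‖deriv γ t‖ := by
  have hkey := key_alg (γ t).re (deriv γ t).re (deriv γ t).im (phi (γ t).im)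
    (Real.exp (γ t).im / (2 + Real.exp (γ t).im)) ‖deriv γ t‖
    (phi_pos _) (div_nonneg (Real.exp_pos _).le (two_add_exp_pos _).le)
    (by rw [div_le_one (two_add_exp_pos _)]; linarith [Real.exp_pos (γ t).im])
    (norm_nonneg _) (le_of_eq (norm_sq_complex _))
  refine le_trans hkey ?_
  exact mul_le_mul_of_nonneg_right (inv_phi_le_lam _) (norm_nonneg _)

lemma continuous_Fd (γ : ℝ → ℂ) (hγ : ContDiff ℝ 1 γ) : Continuous (Fd γ) := by
  have hc : Continuous γ := hγ.continuous
  have hd : Continuous (deriv γ) := hγ.continuous_deriv le_rfl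
  have hre : Continuous fun t => (γ t).re := Complex.continuous_re.comp hc
  have him : Continuous fun t => (γ t).im := Complex.continuous_im.comp hc
  have hre' : Continuous fun t => (deriv γ t).re := Complex.continuous_re.comp hd
  have him' : Continuous fun t => (deriv γ t).im := Complex.continuous_im.comp hd
  have hph : Continuous fun t => phi (γ t).im := continuous_phi.comp him
  have hexp : Continuous fun t => Real.exp (γ t).im := Real.continuous_exp.comp him
  have hp : Continuous fun t => Real.exp (γ t).im / (2 + Real.exp (γ t).im) :=
    hexp.div (continuous_const.add hexp) fun t => (two_add_exp_pos _).ne'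
  unfold Fd
  refine Continuous.sub (Continuous.div ?_ ?_ fun t => (Spos (γ t)).ne') ?_
  · exact ((continuous_const.mul hre).mul hre').add
      ((continuous_const.mul hph).mul (hp.mul him'))
  · exact (hre.pow 2).add (hph.pow 2)
  · exact Continuous.div (hp.mul him') hph fun t => (phi_pos _).ne'

lemma Fl_le_pathLen (γ : ℝ → ℂ) (hγ : ContDiff ℝ 1 γ) :
    Fl (γ 1) - Fl (γ 0) ≤ pathLen γ := by
  have hdiff : Differentiable ℝ γ := hγ.differentiable one_ne_zero
  have h1 : ∀ t ∈ Set.uIcc (0:ℝ) 1, HasDerivAt (fun s => Fl (γ s)) (Fd γ t) t :=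
    fun t _ => hasDerivAt_Fl_comp γ hdiff t
  have h2 : IntervalIntegrable (Fd γ) volume 0 1 :=
    (continuous_Fd γ hγ).intervalIntegrable 0 1
  have h3 : Fl (γ 1) - Fl (γ 0) = ∫ t in (0:ℝ)..1, Fd γ t :=
    (intervalIntegral.integral_eq_sub_of_hasDerivAt h1 h2).symm
  rw [h3, pathLen]
  have hInt : IntervalIntegrable (fun t => lam (γ t) * ‖deriv γ t‖) volume 0 1 := by
    apply Continuous.intervalIntegrable
    exact (continuous_lam.comp hγ.continuous).mul
      ((hγ.continuous_deriv le_rfl).norm)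
  exact intervalIntegral.integral_mono_on zero_le_one h2 hInt fun t _ => Fd_le γ t

lemma Ydist_nonempty (p q : ℂ) :
    ∃ L, L ∈ {L : ℝ | ∃ γ : ℝ → ℂ, ContDiff ℝ 1 γ ∧ γ 0 = p ∧ γ 1 = q ∧ L = pathLen γ} := by
  refine ⟨pathLen (fun t => p + (t:ℂ) * (q - p)), fun t => p + (t:ℂ) * (q - p), ?_, by simp, by simp, rfl⟩
  exact contDiff_const.add ((Complex.ofRealCLM.contDiff.of_le le_top).mul contDiff_const)

lemma Ydist_bddBelow (p q : ℂ) :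
    ∀ L ∈ {L : ℝ | ∃ γ : ℝ → ℂ, ContDiff ℝ 1 γ ∧ γ 0 = p ∧ γ 1 = q ∧ L = pathLen γ}, (0:ℝ) ≤ L := by
  rintro L ⟨γ, hγ, h0, h1, rfl⟩
  apply intervalIntegral.integral_nonneg zero_le_one
  intro t _
  exact mul_nonneg (lam_nonneg _) (norm_nonneg _)

lemma Fl_le_Ydist (z : ℂ) : Fl z - Fl Complex.I ≤ Ydist Complex.I z := by
  apply le_csInf (Ydist_nonempty _ _)
  rintro L ⟨γ, hγ, h0, h1, rfl⟩
  have := Fl_le_pathLen γ hγ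
  rwa [h0, h1] at this

noncomputable def psiP (t : ℝ) : ℝ := (1 - Real.cos (Real.pi * t)) / 2
noncomputable def hP (y M t : ℝ) : ℝ :=
  1 + (y - 1) * psiP t + M * Real.sin (Real.pi * t)
noncomputable def gamP (x y M t : ℝ) : ℂ :=
  ((x * psiP t : ℝ) : ℂ) + ((hP y M t : ℝ) : ℂ) * Complex.I

lemma hasDerivAt_psiP (t : ℝ) :
    HasDerivAt psiP (Real.pi / 2 * Real.sin (Real.pi * t)) t := by
  have h1 : HasDerivAt (fun t : ℝ => Real.pi * t) Real.pi t := by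
    simpa using (hasDerivAt_id t).const_mul Real.pi
  have h2 := (Real.hasDerivAt_cos (Real.pi * t)).comp t h1
  have h3 := ((hasDerivAt_const t (1:ℝ)).sub h2).div_const 2
  refine h3.congr_deriv ?_
  ring

lemma hasDerivAt_hP (y M t : ℝ) :
    HasDerivAt (hP y M)
      ((y - 1) * (Real.pi / 2 * Real.sin (Real.pi * t))
        + M * (Real.pi * Real.cos (Real.pi * t))) t := by
  have h1 : HasDerivAt (fun t : ℝ => Real.pi * t) Real.pi t := by
    simpa using (hasDerivAt_id t).const_mul Real.pi
  have h2 := (Real.hasDerivAt_sin (Real.pi * t)).comp t h1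
  have h3 := ((hasDerivAt_psiP t).const_mul (y - 1)).const_add 1
  have h4 := h3.add (h2.const_mul M)
  refine h4.congr_deriv ?_
  ring

lemma hasDerivAt_gamP (x y M t : ℝ) :
    HasDerivAt (gamP x y M)
      (((x * (Real.pi / 2 * Real.sin (Real.pi * t)) : ℝ) : ℂ)
        + (((y - 1) * (Real.pi / 2 * Real.sin (Real.pi * t))
            + M * (Real.pi * Real.cos (Real.pi * t)) : ℝ) : ℂ) * Complex.I) t := by
  have h1 := (((hasDerivAt_psiP t).const_mul x).ofReal_comp)
  have h2 := ((hasDerivAt_hP y M t).ofReal_comp).mul_const Complex.I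
  exact h1.add h2

lemma contDiff_psiP : ContDiff ℝ 1 psiP := by
  apply ContDiff.div_const
  exact contDiff_const.sub (Real.contDiff_cos.of_le le_top |>.comp
    (contDiff_const.mul contDiff_id))

lemma contDiff_hP (y M : ℝ) : ContDiff ℝ 1 (hP y M) := by
  apply ContDiff.add
  · exact contDiff_const.add (contDiff_const.mul contDiff_psiP)
  · exact contDiff_const.mul (Real.contDiff_sin.of_le le_top |>.comp
      (contDiff_const.mul contDiff_id))

lemma contDiff_gamP (x y M : ℝ) : ContDiff ℝ 1 (gamP x y M) := by
  apply ContDiff.add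
  · exact (Complex.ofRealCLM.contDiff.of_le le_top).comp
      (contDiff_const.mul contDiff_psiP)
  · exact (((Complex.ofRealCLM.contDiff.of_le le_top).comp (contDiff_hP y M)).mul
      contDiff_const)

lemma psiP_zero : psiP 0 = 0 := by simp [psiP]
lemma psiP_one : psiP 1 = 1 := by simp [psiP, Real.cos_pi]
lemma psiP_mem (t : ℝ) : 0 ≤ psiP t ∧ psiP t ≤ 1 := by
  have h1 := Real.cos_le_one (Real.pi * t)
  have h2 := Real.neg_one_le_cos (Real.pi * t)
  constructor <;> (unfold psiP; linarith)

lemma gamP_zero (x y M : ℝ) : gamP x y M 0 = Complex.I := by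
  simp [gamP, psiP_zero, hP]
lemma gamP_one (x y M : ℝ) : gamP x y M 1 = (x : ℂ) + (y : ℝ) * Complex.I := by
  simp [gamP, psiP_one, hP, Real.sin_pi]

lemma gamP_im (x y M t : ℝ) : (gamP x y M t).im = hP y M t := by
  simp [gamP]

set_option maxHeartbeats 1000000 in
lemma pointwise_bound (x y M : ℝ) (hy1 : 1 ≤ y) (hy2 : y ≤ 2) (hM : 1 ≤ M)
    (hxM : |x| ≤ M) {t : ℝ} (ht : t ∈ Set.Icc (0:ℝ) 1) :
    lam (gamP x y M t) * ‖deriv (gamP x y M) t‖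
      ≤ Real.pi + M * Real.pi * |Real.cos (Real.pi * t)|
          / (1 + M * Real.sin (Real.pi * t)) := by
  obtain ⟨ht0, ht1⟩ := ht
  have hst : 0 ≤ Real.sin (Real.pi * t) := by
    apply Real.sin_nonneg_of_nonneg_of_le_pi
    · positivity
    · nlinarith [Real.pi_pos]
  have hst1 : Real.sin (Real.pi * t) ≤ 1 := Real.sin_le_one _
  obtain ⟨hψ0, hψ1⟩ := psiP_mem t
  set st := Real.sin (Real.pi * t) with hstdef
  set c := Real.cos (Real.pi * t) with hcdef
  have hD : (0:ℝ) < 1 + M * st := by nlinarith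
  have hDh : 1 + M * st ≤ hP y M t := by
    unfold hP; nlinarith
  have hh0 : (0:ℝ) < hP y M t := lt_of_lt_of_le hD hDh
  have hh1 : (1:ℝ) ≤ hP y M t := by
    unfold hP; nlinarith
  have hlam : lam (gamP x y M t) = 1 / hP y M t := by
    rw [lam, gamP_im, if_pos hh1]
  have hderiv : deriv (gamP x y M) t
      = ((x * (Real.pi / 2 * st) : ℝ) : ℂ)
        + (((y - 1) * (Real.pi / 2 * st) + M * (Real.pi * c) : ℝ) : ℂ) * Complex.I :=
    (hasDerivAt_gamP x y M t).deriv
  have hpi := Real.pi_pos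
  have hnorm : ‖deriv (gamP x y M) t‖
      ≤ |x * (Real.pi / 2 * st)| + |(y - 1) * (Real.pi / 2 * st) + M * (Real.pi * c)| := by
    rw [hderiv]
    refine le_trans (norm_add_le _ _) ?_
    rw [norm_mul, Complex.norm_I, mul_one, Complex.norm_real, Complex.norm_real,
      Real.norm_eq_abs, Real.norm_eq_abs]
  have e0 : |x * (Real.pi / 2 * st)| ≤ M * (Real.pi / 2) * st := by
    rw [abs_mul, abs_of_nonneg (by positivity : (0:ℝ) ≤ Real.pi / 2 * st)]
    have := mul_le_mul_of_nonneg_right hxM (show (0:ℝ) ≤ Real.pi / 2 * st by positivity)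
    nlinarith [this]
  have e0' : |(y - 1) * (Real.pi / 2 * st) + M * (Real.pi * c)|
      ≤ (y - 1) * (Real.pi / 2) * st + M * Real.pi * |c| := by
    refine le_trans (abs_add_le _ _) ?_
    have i1 : |(y - 1) * (Real.pi / 2 * st)| = (y - 1) * (Real.pi / 2 * st) :=
      abs_of_nonneg (mul_nonneg (by linarith) (by positivity))
    have i2 : |M * (Real.pi * c)| = M * Real.pi * |c| := by
      rw [abs_mul, abs_mul, abs_of_nonneg (by linarith : (0:ℝ) ≤ M),
        abs_of_nonneg hpi.le]
      ring
    rw [i1, i2]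
    linarith
  set T := M * Real.pi * |c| / (1 + M * st) with hT
  have hT0 : 0 ≤ T := by
    apply div_nonneg _ hD.le
    positivity
  have e1 : M * (Real.pi / 2) * st ≤ Real.pi / 2 * hP y M t := by nlinarith
  have e2 : (y - 1) * (Real.pi / 2) * st ≤ Real.pi / 2 * hP y M t := by
    have i3 : (y - 1) * st ≤ 1 := by
      nlinarith [mul_nonneg (show (0:ℝ) ≤ 2 - y by linarith) hst]
    nlinarith
  have e3 : M * Real.pi * |c| ≤ T * hP y M t := by
    have hc1 : T * (1 + M * st) = M * Real.pi * |c| := div_mul_cancel₀ _ hD.ne'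
    nlinarith [mul_le_mul_of_nonneg_left hDh hT0]
  calc lam (gamP x y M t) * ‖deriv (gamP x y M) t‖
      ≤ (1 / hP y M t) * (|x * (Real.pi / 2 * st)|
          + |(y - 1) * (Real.pi / 2 * st) + M * (Real.pi * c)|) := by
        rw [hlam]
        exact mul_le_mul_of_nonneg_left hnorm (by positivity)
    _ ≤ Real.pi + T := by
        rw [one_div_mul_eq_div, div_le_iff₀ hh0]
        have expand : (Real.pi + T) * hP y M t
            = Real.pi / 2 * hP y M t + Real.pi / 2 * hP y M t + T * hP y M t := by ring
        rw [expand]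
        linarith [e0, e0', e1, e2, e3]

section UpperBound

variable (M : ℝ)

noncomputable def qF (t : ℝ) : ℝ :=
  M * Real.pi * |Real.cos (Real.pi * t)| / (1 + M * Real.sin (Real.pi * t))

noncomputable def GF (t : ℝ) : ℝ := Real.log (1 + M * Real.sin (Real.pi * t))

lemma denom_pos (hM : 1 ≤ M) {t : ℝ} (ht : t ∈ Set.Icc (0:ℝ) 1) :
    (0:ℝ) < 1 + M * Real.sin (Real.pi * t) := by
  have hst : 0 ≤ Real.sin (Real.pi * t) := by
    apply Real.sin_nonneg_of_nonneg_of_le_pi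
    · exact mul_nonneg Real.pi_pos.le ht.1
    · nlinarith [Real.pi_pos, ht.2]
  nlinarith

lemma continuousOn_qF (hM : 1 ≤ M) : ContinuousOn (qF M) (Set.Icc 0 1) := by
  apply ContinuousOn.div
  · apply Continuous.continuousOn
    exact continuous_const.mul
      ((Real.continuous_cos.comp (continuous_const.mul continuous_id)).abs)
  · apply Continuous.continuousOn
    exact continuous_const.add (continuous_const.mul
      (Real.continuous_sin.comp (continuous_const.mul continuous_id)))
  · exact fun t ht => (denom_pos M hM ht).ne'

lemma hasDerivAt_GF (hM : 1 ≤ M) {t : ℝ} (ht : t ∈ Set.Icc (0:ℝ) 1) :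
    HasDerivAt (GF M)
      (M * (Real.pi * Real.cos (Real.pi * t)) / (1 + M * Real.sin (Real.pi * t))) t := by
  have h1 : HasDerivAt (fun t : ℝ => Real.pi * t) Real.pi t := by
    simpa using (hasDerivAt_id t).const_mul Real.pi
  have h2 := (Real.hasDerivAt_sin (Real.pi * t)).comp t h1
  have h3 := (h2.const_mul M).const_add 1
  have h4 := (Real.hasDerivAt_log (denom_pos M hM ht).ne').comp t h3
  refine h4.congr_deriv ?_
  field_simp

lemma GF_zero : GF M 0 = 0 := by simp [GF]
lemma GF_one : GF M 1 = 0 := by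
  rw [GF, mul_one, Real.sin_pi]
  simp
lemma GF_half : GF M (1/2) = Real.log (1 + M) := by
  rw [GF, show Real.pi * (1/2) = Real.pi / 2 by ring, Real.sin_pi_div_two, mul_one]

lemma integral_qF_first (hM : 1 ≤ M) :
    ∫ t in (0:ℝ)..(1/2), qF M t = Real.log (1 + M) := by
  have hsub : Set.uIcc (0:ℝ) (1/2) ⊆ Set.Icc (0:ℝ) 1 := by
    rw [Set.uIcc_of_le (by norm_num : (0:ℝ) ≤ 1/2)]
    exact Set.Icc_subset_Icc le_rfl (by norm_num)
  have hcong : ∀ t ∈ Set.uIcc (0:ℝ) (1/2),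
      qF M t = M * (Real.pi * Real.cos (Real.pi * t)) / (1 + M * Real.sin (Real.pi * t)) := by
    intro t ht
    rw [Set.uIcc_of_le (by norm_num : (0:ℝ) ≤ 1/2)] at ht
    have hc : 0 ≤ Real.cos (Real.pi * t) := by
      apply Real.cos_nonneg_of_mem_Icc
      constructor
      · nlinarith [Real.pi_pos, ht.1]
      · nlinarith [Real.pi_pos, ht.2]
    rw [qF, abs_of_nonneg hc]
    ring_nf
  rw [intervalIntegral.integral_congr hcong]
  have hFTC := intervalIntegral.integral_eq_sub_of_hasDerivAt
    (f := GF M)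
    (f' := fun t => M * (Real.pi * Real.cos (Real.pi * t)) / (1 + M * Real.sin (Real.pi * t)))
    (fun t ht => hasDerivAt_GF M hM (hsub ht)) ?_
  · rw [hFTC, GF_half, GF_zero, sub_zero]
  · apply ContinuousOn.intervalIntegrable
    apply ContinuousOn.mono _ hsub
    apply ContinuousOn.div
    · exact (continuous_const.mul (continuous_const.mul
        (Real.continuous_cos.comp (continuous_const.mul continuous_id)))).continuousOn
    · exact (continuous_const.add (continuous_const.mul
        (Real.continuous_sin.comp (continuous_const.mul continuous_id)))).continuousOn
    · exact fun t ht => (denom_pos M hM ht).ne'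

lemma integral_qF_second (hM : 1 ≤ M) :
    ∫ t in (1/2:ℝ)..1, qF M t = Real.log (1 + M) := by
  have hsub : Set.uIcc (1/2:ℝ) 1 ⊆ Set.Icc (0:ℝ) 1 := by
    rw [Set.uIcc_of_le (by norm_num : (1/2:ℝ) ≤ 1)]
    exact Set.Icc_subset_Icc (by norm_num) le_rfl
  have hcong : ∀ t ∈ Set.uIcc (1/2:ℝ) 1,
      qF M t = -(M * (Real.pi * Real.cos (Real.pi * t)) / (1 + M * Real.sin (Real.pi * t))) := by
    intro t ht
    rw [Set.uIcc_of_le (by norm_num : (1/2:ℝ) ≤ 1)] at ht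
    have hc : Real.cos (Real.pi * t) ≤ 0 := by
      apply Real.cos_nonpos_of_pi_div_two_le_of_le
      · nlinarith [Real.pi_pos, ht.1]
      · nlinarith [Real.pi_pos, ht.2]
    rw [qF, abs_of_nonpos hc]
    ring_nf
  rw [intervalIntegral.integral_congr hcong, intervalIntegral.integral_neg]
  have hFTC := intervalIntegral.integral_eq_sub_of_hasDerivAt
    (f := GF M)
    (f' := fun t => M * (Real.pi * Real.cos (Real.pi * t)) / (1 + M * Real.sin (Real.pi * t)))
    (fun t ht => hasDerivAt_GF M hM (hsub ht)) ?_
  · rw [hFTC, GF_half, GF_one]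
    ring
  · apply ContinuousOn.intervalIntegrable
    apply ContinuousOn.mono _ hsub
    apply ContinuousOn.div
    · exact (continuous_const.mul (continuous_const.mul
        (Real.continuous_cos.comp (continuous_const.mul continuous_id)))).continuousOn
    · exact (continuous_const.add (continuous_const.mul
        (Real.continuous_sin.comp (continuous_const.mul continuous_id)))).continuousOn
    · exact fun t ht => (denom_pos M hM ht).ne'

lemma intervalIntegrable_qF (hM : 1 ≤ M) {a b : ℝ} (hab : Set.uIcc a b ⊆ Set.Icc 0 1) :
    IntervalIntegrable (qF M) volume a b :=
  ContinuousOn.intervalIntegrable ((continuousOn_qF M hM).mono hab)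

lemma pathLen_gamP_le (x y : ℝ) (hy1 : 1 ≤ y) (hy2 : y ≤ 2) (hM : 1 ≤ M)
    (hxM : |x| ≤ M) :
    pathLen (gamP x y M) ≤ Real.pi + 2 * Real.log (1 + M) := by
  have hu01 : Set.uIcc (0:ℝ) 1 = Set.Icc 0 1 := Set.uIcc_of_le zero_le_one
  have hIntL : IntervalIntegrable (fun t => lam (gamP x y M t) * ‖deriv (gamP x y M) t‖)
      volume 0 1 := by
    apply Continuous.intervalIntegrable
    exact (continuous_lam.comp (contDiff_gamP x y M).continuous).mul
      ((contDiff_gamP x y M).continuous_deriv le_rfl).norm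
  have hIntR : IntervalIntegrable (fun t => Real.pi + qF M t) volume 0 1 := by
    apply IntervalIntegrable.add intervalIntegrable_const
    exact intervalIntegrable_qF M hM (by rw [hu01])
  have hmono : pathLen (gamP x y M) ≤ ∫ t in (0:ℝ)..1, (Real.pi + qF M t) := by
    rw [pathLen]
    apply intervalIntegral.integral_mono_on zero_le_one hIntL hIntR
    intro t ht
    exact pointwise_bound x y M hy1 hy2 hM hxM ht
  refine le_trans hmono ?_
  rw [intervalIntegral.integral_add intervalIntegrable_const
    (intervalIntegrable_qF M hM (by rw [hu01]))]
  have hsplit : ∫ t in (0:ℝ)..1, qF M t = 2 * Real.log (1 + M) := by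
    have h1 := intervalIntegrable_qF M hM (a := 0) (b := 1/2)
      (by rw [Set.uIcc_of_le (by norm_num : (0:ℝ) ≤ 1/2)]
          exact Set.Icc_subset_Icc le_rfl (by norm_num))
    have h2 := intervalIntegrable_qF M hM (a := 1/2) (b := 1)
      (by rw [Set.uIcc_of_le (by norm_num : (1/2:ℝ) ≤ 1)]
          exact Set.Icc_subset_Icc (by norm_num) le_rfl)
    rw [← intervalIntegral.integral_add_adjacent_intervals h1 h2,
      integral_qF_first M hM, integral_qF_second M hM]
    ring
  rw [hsplit]
  simp

end UpperBound

lemma Ydist_upper (z : ℂ) (h1 : 1 ≤ z.im) (h2 : z.im ≤ 2) :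
    Ydist Complex.I z ≤ Real.pi + 2 * Real.log (1 + max |z.re| 1) := by
  set M := max |z.re| 1 with hMdef
  have hM : 1 ≤ M := le_max_right _ _
  have hxM : |z.re| ≤ M := le_max_left _ _
  have hmem : pathLen (gamP z.re z.im M)
      ∈ {L : ℝ | ∃ γ : ℝ → ℂ, ContDiff ℝ 1 γ ∧ γ 0 = Complex.I ∧ γ 1 = z ∧ L = pathLen γ} :=
    ⟨gamP z.re z.im M, contDiff_gamP _ _ _, gamP_zero _ _ _,
      by rw [gamP_one, Complex.re_add_im], rfl⟩
  refine le_trans (csInf_le ⟨0, fun L hL => Ydist_bddBelow _ _ L hL⟩ hmem) ?_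
  exact pathLen_gamP_le M z.re z.im h1 h2 hM hxM

lemma Fl_I : Fl Complex.I = Real.log (phi 1) := by
  rw [Fl]
  simp only [Complex.I_re, Complex.I_im]
  rw [show (0:ℝ)^2 + phi 1 ^ 2 = phi 1 ^ 2 by ring, Real.log_pow]
  push_cast
  ring

lemma phi_one_le_two : phi 1 ≤ 2 := by
  rw [phi, Real.log_le_iff_le_exp (by positivity)]
  have h1 : Real.exp 2 = Real.exp 1 * Real.exp 1 := by
    rw [← Real.exp_add]; norm_num
  nlinarith [Real.exp_one_gt_d9]

lemma lenBeta_le (r : ℝ) : lenBeta r ≤ 4 * Real.exp (r / 2) := by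
  set E := Real.exp (r / 2) with hEdef
  have hE : 0 < E := Real.exp_pos _
  have hEsq : E * E = Real.exp r := by
    rw [hEdef, ← Real.exp_add]; norm_num
  have hφ1 : 0 < phi 1 := phi_pos 1
  have hsub : {x : ℝ | Ydist Complex.I ((x : ℂ) + Complex.I) < r}
      ⊆ Set.Ioo (-(2 * E)) (2 * E) := by
    intro x hx
    simp only [Set.mem_setOf_eq] at hx
    have hlow := Fl_le_Ydist ((x : ℂ) + Complex.I)
    have hre : ((x : ℂ) + Complex.I).re = x := by simp
    have him : ((x : ℂ) + Complex.I).im = 1 := by simp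
    rw [Fl, hre, him, Fl_I] at hlow
    have h1 : Real.log (x ^ 2 + phi 1 ^ 2) < r + 2 * Real.log (phi 1) := by
      linarith [lt_of_le_of_lt hlow hx]
    have hpos : (0:ℝ) < x ^ 2 + phi 1 ^ 2 := by positivity
    have h2 : x ^ 2 + phi 1 ^ 2 < Real.exp r * (phi 1 ^ 2) := by
      have := Real.exp_lt_exp.2 h1
      rw [Real.exp_log hpos] at this
      rw [Real.exp_add] at this
      rw [show (2:ℝ) * Real.log (phi 1) = Real.log (phi 1) + Real.log (phi 1) by ring,
        Real.exp_add, Real.exp_log hφ1] at this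
      nlinarith [this]
    have h3 : x ^ 2 < 4 * Real.exp r := by
      have hφsq : phi 1 ^ 2 ≤ 4 := by nlinarith [phi_one_le_two, hφ1]
      have hprod := mul_le_mul_of_nonneg_left hφsq (Real.exp_pos r).le
      nlinarith [sq_nonneg (phi 1)]
    have h4 : x ^ 2 < (2 * E) ^ 2 := by nlinarith
    constructor
    · nlinarith [sq_nonneg (x + 2 * E)]
    · nlinarith [sq_nonneg (x - 2 * E)]
  have hm := measure_mono (μ := (volume : Measure ℝ)) hsub
  rw [Real.volume_Ioo] at hm
  unfold lenBeta
  calc (volume {x : ℝ | Ydist Complex.I ((x : ℂ) + Complex.I) < r}).toReal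
      ≤ (ENNReal.ofReal (2 * E - -(2 * E))).toReal :=
        ENNReal.toReal_mono ENNReal.ofReal_ne_top hm
    _ = 4 * E := by
        rw [ENNReal.toReal_ofReal (by linarith)]; ring

lemma volume_rect (a b c d : ℝ) :
    volume {z : ℂ | z.re ∈ Set.Ioo a b ∧ z.im ∈ Set.Icc c d}
      = ENNReal.ofReal (b - a) * ENNReal.ofReal (d - c) := by
  have hset : {z : ℂ | z.re ∈ Set.Ioo a b ∧ z.im ∈ Set.Icc c d}
      = Complex.measurableEquivRealProd ⁻¹' (Set.Ioo a b ×ˢ Set.Icc c d) := by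
    ext z
    simp [Set.mem_prod]
  rw [hset, Complex.volume_preserving_equiv_real_prod.measure_preimage
    ((measurableSet_Ioo.prod measurableSet_Icc).nullMeasurableSet)]
  rw [show (volume : Measure (ℝ × ℝ)) = Measure.prod volume volume from rfl]
  rw [Measure.prod_prod, Real.volume_Ioo, Real.volume_Icc]

lemma Dball_inter_subset_box (r : ℝ) :
    Dball r ∩ {z : ℂ | 1 ≤ z.im} ⊆
      {z : ℂ | |z.re| ≤ 2 * Real.exp r ∧ 1 ≤ z.im ∧ z.im ≤ 2 * Real.exp r} := by
  rintro z ⟨hz, him⟩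
  have hz' : Ydist Complex.I z < r := hz
  have him' : 1 ≤ z.im := him
  have hlow := Fl_le_Ydist z
  rw [Fl, Fl_I] at hlow
  have hφ : 0 < phi z.im := phi_pos _
  have hφ1 : 0 < phi 1 := phi_pos 1
  have hpos : (0:ℝ) < z.re ^ 2 + phi z.im ^ 2 := Spos z
  have h1 : Real.log (z.re ^ 2 + phi z.im ^ 2)
      < r + Real.log (phi z.im) + Real.log (phi 1) := by
    linarith [lt_of_le_of_lt hlow hz']
  have h2 : z.re ^ 2 + phi z.im ^ 2 < Real.exp r * phi z.im * phi 1 := by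
    have h := Real.exp_lt_exp.2 h1
    rwa [Real.exp_log hpos, Real.exp_add, Real.exp_add, Real.exp_log hφ,
      Real.exp_log hφ1] at h
  have h2' : z.re ^ 2 + phi z.im ^ 2 < 2 * Real.exp r * phi z.im := by
    have hprod := mul_le_mul_of_nonneg_left phi_one_le_two
      (mul_pos (Real.exp_pos r) hφ).le
    nlinarith
  have hφK : phi z.im < 2 * Real.exp r := by
    have hφφ : phi z.im * phi z.im < (2 * Real.exp r) * phi z.im := by
      nlinarith [sq_nonneg z.re]
    exact lt_of_mul_lt_mul_right hφφ hφ.le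
  have hyK : z.im ≤ 2 * Real.exp r := le_trans (lt_phi z.im).le hφK.le
  have hxK : |z.re| ≤ 2 * Real.exp r := by
    have hx2 : z.re ^ 2 < (2 * Real.exp r) ^ 2 := by nlinarith
    rw [abs_le]
    constructor
    · nlinarith [sq_nonneg (z.re + 2 * Real.exp r), Real.exp_pos r]
    · nlinarith [sq_nonneg (z.re - 2 * Real.exp r), Real.exp_pos r]
  exact ⟨hxK, him', hyK⟩

lemma box_eq (K : ℝ) :
    {z : ℂ | |z.re| ≤ K ∧ 1 ≤ z.im ∧ z.im ≤ K}
      = Complex.measurableEquivRealProd ⁻¹' (Set.Icc (-K) K ×ˢ Set.Icc 1 K) := by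
  ext z
  simp only [Set.mem_setOf_eq, Set.mem_preimage, Complex.measurableEquivRealProd_apply,
    Set.mem_prod, Set.mem_Icc, abs_le]

lemma integrableOn_box (K : ℝ) :
    IntegrableOn (fun z => lam z ^ 2)
      {z : ℂ | |z.re| ≤ K ∧ 1 ≤ z.im ∧ z.im ≤ K} volume := by
  have hBm : MeasurableSet {z : ℂ | |z.re| ≤ K ∧ 1 ≤ z.im ∧ z.im ≤ K} := by
    rw [box_eq]
    exact Complex.measurableEquivRealProd.measurable
      (measurableSet_Icc.prod measurableSet_Icc)
  have hvol : volume {z : ℂ | |z.re| ≤ K ∧ 1 ≤ z.im ∧ z.im ≤ K} ≠ ⊤ := by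
    rw [box_eq, Complex.volume_preserving_equiv_real_prod.measure_preimage
      ((measurableSet_Icc.prod measurableSet_Icc)).nullMeasurableSet]
    rw [show (volume : Measure (ℝ × ℝ)) = Measure.prod volume volume from rfl,
      Measure.prod_prod, Real.volume_Icc, Real.volume_Icc]
    exact ENNReal.mul_ne_top ENNReal.ofReal_ne_top ENNReal.ofReal_ne_top
  apply Measure.integrableOn_of_bounded (M := 1) hvol
  · exact (continuous_lam.pow 2).aestronglyMeasurable
  · filter_upwards [ae_restrict_mem hBm] with z hz
    have him : 1 ≤ z.im := hz.2.1
    have hlam : lam z = 1 / z.im := if_pos him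
    rw [Real.norm_eq_abs, abs_of_nonneg (sq_nonneg _), hlam, div_pow, one_pow]
    rw [div_le_one (by positivity)]
    nlinarith


/- STATEMENT 13: for the surface Y (metric |dz|/y on P = {y ≥ 1}, e^{1−y}|dz|
on Q = {y < 1}), with a = i, there is c > 0 such that for all sufficiently
large r, area(P ∩ D(a, r)) ≥ c·length(β_r). -/
theorem area_P_lower_bound :
    ∃ c : ℝ, 0 < c ∧ ∀ᶠ r : ℝ in Filter.atTop,
      c * lenBeta r ≤ Yarea (Dball r ∩ {z : ℂ | 1 ≤ z.im}) := by
  refine ⟨1 / (16 * Real.exp 2), by positivity, ?_⟩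
  rw [Filter.eventually_atTop]
  refine ⟨6, fun r hr => ?_⟩
  set E := Real.exp (r / 2) with hEdef
  set X := Real.exp (r / 2 - 2) with hXdef
  set R := X - 1 with hRdef
  have hXe : Real.exp 1 ≤ X := by
    rw [hXdef]; exact Real.exp_le_exp.2 (by linarith)
  have he1 : (2.7182818283 : ℝ) < Real.exp 1 := Real.exp_one_gt_d9
  have hX2 : (2:ℝ) < X := by linarith
  have hR1 : (1:ℝ) ≤ R := by rw [hRdef]; linarith
  have hR0 : (0:ℝ) < R := by linarith
  set S := {z : ℂ | z.re ∈ Set.Ioo (-R) R ∧ z.im ∈ Set.Icc 1 2} with hSdef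
  have hsubset : S ⊆ Dball r ∩ {z : ℂ | 1 ≤ z.im} := by
    rintro z ⟨hre, him⟩
    have him1 : 1 ≤ z.im := him.1
    refine ⟨?_, him1⟩
    have hup := Ydist_upper z him1 him.2
    have hmax : max |z.re| 1 ≤ R := max_le (abs_lt.2 ⟨hre.1, hre.2⟩).le hR1
    have hlog : Real.log (1 + max |z.re| 1) ≤ r / 2 - 2 := by
      have hle : 1 + max |z.re| 1 ≤ X := by rw [hRdef] at hmax; linarith
      calc Real.log (1 + max |z.re| 1) ≤ Real.log X := by
            apply Real.log_le_log _ hle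
            positivity
        _ = r / 2 - 2 := by rw [hXdef, Real.log_exp]
    have hpi := Real.pi_lt_d2
    show Ydist Complex.I z < r
    calc Ydist Complex.I z ≤ Real.pi + 2 * Real.log (1 + max |z.re| 1) := hup
      _ ≤ Real.pi + 2 * (r / 2 - 2) := by linarith
      _ < r := by linarith
  have hSm : MeasurableSet S :=
    (Complex.measurable_re measurableSet_Ioo).inter
      (Complex.measurable_im measurableSet_Icc)
  have hvolS : volume S = ENNReal.ofReal (2 * R) := by
    rw [hSdef, volume_rect, show R - -R = 2 * R by ring,
      show (2:ℝ) - 1 = 1 by norm_num, ENNReal.ofReal_one, mul_one]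
  have hIntBig : IntegrableOn (fun z => lam z ^ 2)
      (Dball r ∩ {z : ℂ | 1 ≤ z.im}) volume :=
    (integrableOn_box (2 * Real.exp r)).mono_set (Dball_inter_subset_box r)
  have hIntS : IntegrableOn (fun z => lam z ^ 2) S volume := by
    apply (integrableOn_box (2 * Real.exp r)).mono_set
    rintro z ⟨hre, him⟩
    have hexp1 : (1:ℝ) ≤ Real.exp r := by
      rw [← Real.exp_zero]; exact Real.exp_le_exp.2 (by linarith)
    have hRK : R ≤ 2 * Real.exp r := by
      have : X ≤ Real.exp r := by
        rw [hXdef]; exact Real.exp_le_exp.2 (by linarith)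
      rw [hRdef]; linarith
    refine ⟨?_, him.1, by linarith [him.2]⟩
    have := abs_lt.2 ⟨hre.1, hre.2⟩
    linarith [this.le]
  have hstep1 : (∫ z in S, lam z ^ 2) ≤ Yarea (Dball r ∩ {z : ℂ | 1 ≤ z.im}) := by
    apply setIntegral_mono_set hIntBig
      (Filter.Eventually.of_forall fun z => sq_nonneg (lam z))
      (HasSubset.Subset.eventuallyLE hsubset)
  have hstep2 : (∫ z in S, (1/4 : ℝ)) ≤ ∫ z in S, lam z ^ 2 := by
    apply setIntegral_mono_on ?_ hIntS hSm ?_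
    · exact integrableOn_const (by rw [hvolS]; exact ENNReal.ofReal_ne_top)
    · intro z hz
      have hlam : lam z = 1 / z.im := if_pos hz.2.1
      rw [hlam, div_pow, one_pow, le_div_iff₀ (by nlinarith [hz.2.1] : (0:ℝ) < z.im ^ 2)]
      nlinarith [hz.2.1, hz.2.2]
  have hconst : (∫ z in S, (1/4 : ℝ)) = R / 2 := by
    rw [setIntegral_const, measureReal_def, hvolS, ENNReal.toReal_ofReal (by positivity), smul_eq_mul]
    ring
  have hlen := lenBeta_le r
  have hXE : X = E / Real.exp 2 := by rw [hXdef, hEdef, Real.exp_sub]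
  calc (1 / (16 * Real.exp 2)) * lenBeta r
      ≤ (1 / (16 * Real.exp 2)) * (4 * E) :=
        mul_le_mul_of_nonneg_left hlen (by positivity)
    _ = X / 4 := by rw [hXE]; field_simp; ring
    _ ≤ R / 2 := by rw [hRdef]; linarith
    _ = ∫ z in S, (1/4 : ℝ) := hconst.symm
    _ ≤ ∫ z in S, lam z ^ 2 := hstep2
    _ ≤ Yarea (Dball r ∩ {z : ℂ | 1 ≤ z.im}) := hstep1
end

section
/- Let Q = {x + iy : y < 1} with metric e^{1−y}|dz| and boundary β = {y = 1}. For p ∈ Q let p′ be the point of β closest to p (nearest-point projection). Then there is a constant C such that for every p ∈ Q and every q ∈ β, |d_Q(p, q) − d_Q(p, p′) − d_Q(p′, q)| ≤ C, where d_Q denotes distance in Q ∪ β with the metric e^{1−y}|dz|. -/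
open MeasureTheory

/- STATEMENT 14: in Q = {y < 1} with metric e^{1−y}|dz| and boundary
β = {y = 1}, with p′ the nearest-point projection of p onto β, there is a
constant C such that for every p ∈ Q and q ∈ β,
|d_Q(p, q) − d_Q(p, p′) − d_Q(p′, q)| ≤ C. -/
lemma cs_bound (y : ℝ) (hy : y ≤ 1) (d : ℂ) :
    |d.re| + (Real.exp (1-y) - Real.exp (y-1)) * |d.im| ≤ Real.exp (1-y) * ‖d‖ := by
  set E := Real.exp (1-y) with hEdef
  set e := Real.exp (y-1) with hedef
  have hEe : E * e = 1 := by rw [hEdef, hedef, ← Real.exp_add]; norm_num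
  have he : 0 < e := Real.exp_pos _
  have he1 : e ≤ 1 := Real.exp_le_one_iff.2 (by linarith)
  have hE1 : 1 ≤ E := Real.one_le_exp_iff.2 (by linarith)
  have hn : ‖d‖^2 = |d.re|^2 + |d.im|^2 := by
    rw [Complex.sq_norm, Complex.normSq_apply, sq_abs, sq_abs]; ring
  have hz : (E*e - 1) * (|d.re|^2 + |d.im|^2) = 0 := by rw [hEe]; ring
  have hid : (E*‖d‖)^2 - (|d.re| + (E-e)*|d.im|)^2
      = ((E-e)*|d.re| - |d.im|)^2 + (1-e^2)*(|d.re|^2 + |d.im|^2)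
        + 2*((E*e - 1)*(|d.re|^2 + |d.im|^2)) := by rw [mul_pow, hn]; ring
  have h1 : 0 ≤ (1-e^2)*(|d.re|^2 + |d.im|^2) :=
    mul_nonneg (by nlinarith) (by positivity)
  have hsq : (|d.re| + (E - e) * |d.im|)^2 ≤ (E*‖d‖)^2 := by
    nlinarith [sq_nonneg ((E-e)*|d.re| - |d.im|), hid, hz, h1]
  have hX : 0 ≤ E * ‖d‖ := by positivity
  have hY : 0 ≤ |d.re| + (E - e) * |d.im| :=
    add_nonneg (abs_nonneg _) (mul_nonneg (by linarith) (abs_nonneg _))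
  calc |d.re| + (E - e) * |d.im| = Real.sqrt ((|d.re| + (E - e) * |d.im|)^2) :=
        (Real.sqrt_sq hY).symm
    _ ≤ Real.sqrt ((E*‖d‖)^2) := Real.sqrt_le_sqrt hsq
    _ = E * ‖d‖ := Real.sqrt_sq hX

noncomputable def Fw (y : ℝ) : ℝ := Real.exp (1 - y) + Real.exp (y - 1)

lemma hasDerivAt_Fw (y : ℝ) :
    HasDerivAt Fw (Real.exp (y-1) - Real.exp (1-y)) y := by
  have h1 : HasDerivAt (fun y : ℝ => Real.exp (1 - y)) (-Real.exp (1-y)) y := by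
    have := (((hasDerivAt_const y (1:ℝ)).sub (hasDerivAt_id y)).exp)
    simpa using this
  have h2 : HasDerivAt (fun y : ℝ => Real.exp (y - 1)) (Real.exp (y-1)) y := by
    have := (((hasDerivAt_id y).sub (hasDerivAt_const y (1:ℝ))).exp)
    simpa using this
  unfold Fw
  have := h1.add h2
  refine this.congr_deriv ?_
  ring

lemma lower_bound (γ : ℝ → ℂ) (hγ : ContDiff ℝ 1 γ) (him : ∀ t, (γ t).im ≤ 1) :
    |(γ 1).re - (γ 0).re| + (Fw (γ 0).im - Fw (γ 1).im)
      ≤ ∫ t in (0:ℝ)..1, Real.exp (1 - (γ t).im) * ‖deriv γ t‖ := by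
  have hdiff : Differentiable ℝ γ := hγ.differentiable one_ne_zero
  have hd : ∀ t, HasDerivAt γ (deriv γ t) t := fun t => (hdiff t).hasDerivAt
  have hcd : Continuous (deriv γ) := hγ.continuous_deriv le_rfl
  have hre : ∀ t, HasDerivAt (fun s => (γ s).re) ((deriv γ t).re) t :=
    fun t => (Complex.reCLM.hasFDerivAt.comp_hasDerivAt t (hd t))
  have him' : ∀ t, HasDerivAt (fun s => (γ s).im) ((deriv γ t).im) t :=
    fun t => (Complex.imCLM.hasFDerivAt.comp_hasDerivAt t (hd t))
  have hcγ : Continuous γ := hγ.continuous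
  have hcim : Continuous (fun t => (γ t).im) := Complex.continuous_im.comp hcγ
  -- α as a function of t
  set α : ℝ → ℝ := fun t => Real.exp (1 - (γ t).im) - Real.exp ((γ t).im - 1) with hα
  have hcα : Continuous α := by fun_prop
  have hα0 : ∀ t, 0 ≤ α t := fun t => by
    have := him t
    simp only [hα, sub_nonneg]
    exact Real.exp_le_exp.2 (by linarith)
  -- FTC for the real part
  have ftc_re : ∫ t in (0:ℝ)..1, (deriv γ t).re = (γ 1).re - (γ 0).re :=
    intervalIntegral.integral_eq_sub_of_hasDerivAt (fun t _ => hre t)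
      ((Complex.continuous_re.comp hcd).intervalIntegrable 0 1)
  -- FTC for -Fw ∘ im ∘ γ
  have ftc_F : ∫ t in (0:ℝ)..1, α t * (deriv γ t).im = Fw (γ 0).im - Fw (γ 1).im := by
    have h1 : ∀ t : ℝ, HasDerivAt (fun s => -Fw ((γ s).im)) (α t * (deriv γ t).im) t := by
      intro t
      have := ((hasDerivAt_Fw ((γ t).im)).comp t (him' t)).neg
      exact this.congr_deriv (by simp only [hα]; ring)
    have h2 : Continuous fun t => α t * (deriv γ t).im := by fun_prop
    have := intervalIntegral.integral_eq_sub_of_hasDerivAt (fun t _ => h1 t)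
      (h2.intervalIntegrable 0 1)
    rw [this]; ring
  -- continuity of all integrands
  have hc1 : Continuous fun t => |(deriv γ t).re| + α t * |(deriv γ t).im| := by fun_prop
  have hc2 : Continuous fun t => Real.exp (1 - (γ t).im) * ‖deriv γ t‖ := by fun_prop
  have step1 : ∫ t in (0:ℝ)..1, (|(deriv γ t).re| + α t * |(deriv γ t).im|)
      ≤ ∫ t in (0:ℝ)..1, Real.exp (1 - (γ t).im) * ‖deriv γ t‖ := by
    refine intervalIntegral.integral_mono_on zero_le_one (hc1.intervalIntegrable 0 1)
      (hc2.intervalIntegrable 0 1) (fun t _ => ?_)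
    exact cs_bound _ (him t) (deriv γ t)
  have split : ∫ t in (0:ℝ)..1, (|(deriv γ t).re| + α t * |(deriv γ t).im|)
      = (∫ t in (0:ℝ)..1, |(deriv γ t).re|) + ∫ t in (0:ℝ)..1, α t * |(deriv γ t).im| :=
    intervalIntegral.integral_add
      ((by fun_prop : Continuous fun t => |(deriv γ t).re|).intervalIntegrable 0 1)
      ((by fun_prop : Continuous fun t => α t * |(deriv γ t).im|).intervalIntegrable 0 1)
  have b1 : |(γ 1).re - (γ 0).re| ≤ ∫ t in (0:ℝ)..1, |(deriv γ t).re| := by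
    rw [← ftc_re]
    exact intervalIntegral.abs_integral_le_integral_abs zero_le_one
  have b2 : Fw (γ 0).im - Fw (γ 1).im ≤ ∫ t in (0:ℝ)..1, α t * |(deriv γ t).im| := by
    rw [← ftc_F]
    refine intervalIntegral.integral_mono_on zero_le_one
      ((by fun_prop : Continuous fun t => α t * (deriv γ t).im).intervalIntegrable 0 1)
      ((by fun_prop : Continuous fun t => α t * |(deriv γ t).im|).intervalIntegrable 0 1)
      (fun t _ => mul_le_mul_of_nonneg_left (le_abs_self _) (hα0 t))
  linarith [step1, split ▸ step1]

section path
variable (a b : ℝ) (f f' : ℝ → ℝ)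
noncomputable def pth (t : ℝ) : ℂ := ((a + b*t : ℝ) : ℂ) + ((f t : ℝ) : ℂ) * Complex.I
lemma pth_re (t : ℝ) : (pth a b f t).re = a + b * t := by simp [pth]
lemma pth_im (t : ℝ) : (pth a b f t).im = f t := by simp [pth]
lemma pth_contDiff (hf : ContDiff ℝ 1 f) : ContDiff ℝ 1 (pth a b f) := by
  unfold pth
  refine ContDiff.add ?_ ?_
  · exact Complex.ofRealCLM.contDiff.comp (contDiff_const.add (contDiff_const.mul contDiff_id))
  · exact (Complex.ofRealCLM.contDiff.comp hf).mul contDiff_const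
lemma pth_hasDerivAt (hf : ∀ t, HasDerivAt f (f' t) t) (t : ℝ) :
    HasDerivAt (pth a b f) ((b : ℂ) + ((f' t : ℝ) : ℂ) * Complex.I) t := by
  unfold pth
  refine HasDerivAt.add ?_ (((hf t).ofReal_comp).mul_const Complex.I)
  have : HasDerivAt (fun t : ℝ => a + b * t) b t := by
    exact ((hasDerivAt_const t a).add ((hasDerivAt_id t).const_mul b)).congr_deriv (by simp)
  simpa using this.ofReal_comp
lemma pth_deriv (hf : ∀ t, HasDerivAt f (f' t) t) :
    deriv (pth a b f) = fun t => (b : ℂ) + ((f' t : ℝ) : ℂ) * Complex.I :=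
  funext fun t => (pth_hasDerivAt a b f f' hf t).deriv
end path


lemma exp_convex_bound {h s : ℝ} (hs0 : 0 ≤ s) (hs1 : s ≤ 1) :
    Real.exp (h*s) ≤ 1 + (Real.exp h - 1)*s := by
  have := convexOn_exp.2 (Set.mem_univ (0:ℝ)) (Set.mem_univ h)
    (by linarith : (0:ℝ) ≤ 1 - s) hs0 (by ring)
  simp only [smul_eq_mul, mul_zero, zero_add, Real.exp_zero, mul_one] at this
  calc Real.exp (h*s) = Real.exp ((1-s)*0 + s*h) := by ring_nf
    _ ≤ (1-s)*1 + s*Real.exp h := by simpa using this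
    _ = 1 + (Real.exp h - 1)*s := by ring



lemma dQ_ge (p q : ℂ)
    (hne : ∃ γ : ℝ → ℂ, ContDiff ℝ 1 γ ∧ (∀ t, (γ t).im ≤ 1) ∧ γ 0 = p ∧ γ 1 = q) :
    |q.re - p.re| + (Fw p.im - Fw q.im) ≤ dQ p q := by
  apply le_csInf
  · obtain ⟨γ, h1, h2, h3, h4⟩ := hne
    exact ⟨_, γ, h1, h2, h3, h4, rfl⟩
  · rintro L ⟨γ, h1, h2, h3, h4, rfl⟩
    have := lower_bound γ h1 h2
    rw [h3, h4] at this
    exact this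

lemma dQ_le (p q : ℂ) {γ : ℝ → ℂ} (h1 : ContDiff ℝ 1 γ) (h2 : ∀ t, (γ t).im ≤ 1)
    (h3 : γ 0 = p) (h4 : γ 1 = q) :
    dQ p q ≤ ∫ t in (0:ℝ)..1, Real.exp (1 - (γ t).im) * ‖deriv γ t‖ := by
  apply csInf_le
  · refine ⟨0, fun L hL => ?_⟩
    obtain ⟨γ', _, _, _, _, rfl⟩ := hL
    exact intervalIntegral.integral_nonneg zero_le_one fun u _ =>
      mul_nonneg (Real.exp_pos _).le (norm_nonneg _)
  · exact ⟨γ, h1, h2, h3, h4, rfl⟩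


-- vertical path
lemma vert_len_aux (p : ℂ) (hp : p.im < 1) :
    ∃ γ : ℝ → ℂ, ContDiff ℝ 1 γ ∧ (∀ t, (γ t).im ≤ 1) ∧ γ 0 = p ∧
      γ 1 = (p.re : ℂ) + Complex.I ∧
      (∫ t in (0:ℝ)..1, Real.exp (1 - (γ t).im) * ‖deriv γ t‖) = Real.exp (1 - p.im) - 1 := by
  set h : ℝ := 1 - p.im with hh
  have hh0 : 0 < h := by simp [hh]; linarith
  set f : ℝ → ℝ := fun t => 1 - h * (1-t)^2 with hf
  set f' : ℝ → ℝ := fun t => h * (2*(1-t)) with hf'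
  have hder : ∀ t, HasDerivAt f (f' t) t := by
    intro t
    have : HasDerivAt (fun t : ℝ => (1-t)^2) (2*(1-t)^1*(0-1)) t :=
      ((hasDerivAt_const t (1:ℝ)).sub (hasDerivAt_id t)).pow 2
    have h2 := ((this.const_mul h).const_sub 1)
    refine h2.congr_deriv ?_
    simp [hf']
  refine ⟨pth p.re 0 f, pth_contDiff _ _ _ ?_, ?_, ?_, ?_, ?_⟩
  · -- ContDiff of f
    exact contDiff_const.sub (contDiff_const.mul ((contDiff_const.sub contDiff_id).pow 2))
  · intro t
    rw [pth_im]
    have : 0 ≤ h * (1-t)^2 := mul_nonneg hh0.le (sq_nonneg _)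
    simp [hf]; linarith
  · apply Complex.ext
    · simp [pth_re]
    · simp [pth_im, hf]; linarith
  · apply Complex.ext
    · simp [pth_re]
    · simp [pth_im, hf]
  · -- length computation
    have e1 : (fun t => Real.exp (1 - ((pth p.re 0 f) t).im) * ‖deriv (pth p.re 0 f) t‖)
        = fun t => Real.exp (h*(1-t)^2) * |f' t| := by
      funext t
      rw [pth_im, pth_deriv _ _ _ _ hder]
      have : (1 : ℝ) - f t = h*(1-t)^2 := by simp [hf]
      rw [this]
      congr 1
      simp [Complex.norm_real]
    rw [e1]
    have e2 : ∫ t in (0:ℝ)..1, Real.exp (h*(1-t)^2) * |f' t|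
        = ∫ t in (0:ℝ)..1, Real.exp (h*(1-t)^2) * f' t := by
      apply intervalIntegral.integral_congr
      intro t ht
      rw [Set.uIcc_of_le zero_le_one] at ht
      have : 0 ≤ f' t := by
        simp only [hf']
        have : 0 ≤ 1 - t := by linarith [ht.2]
        positivity
      simp [abs_of_nonneg this]
    rw [e2]
    have hFTC : ∀ t : ℝ, HasDerivAt (fun t => -Real.exp (h*(1-t)^2))
        (Real.exp (h*(1-t)^2) * f' t) t := by
      intro t
      have hu : HasDerivAt (fun t : ℝ => h*(1-t)^2) (h*(2*(1-t)^1*(0-1))) t :=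
        (((hasDerivAt_const t (1:ℝ)).sub (hasDerivAt_id t)).pow 2).const_mul h
      have := hu.exp.neg
      refine this.congr_deriv ?_
      simp [hf']
    rw [intervalIntegral.integral_eq_sub_of_hasDerivAt (fun t _ => hFTC t)
      ((by fun_prop : Continuous fun t => Real.exp (h*(1-t)^2) * f' t).intervalIntegrable 0 1)]
    simp [hh]; ring

-- horizontal path
lemma horiz_len_aux (x x' : ℝ) :
    ∃ γ : ℝ → ℂ, ContDiff ℝ 1 γ ∧ (∀ t, (γ t).im ≤ 1) ∧ γ 0 = (x:ℂ) + Complex.I ∧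
      γ 1 = (x':ℂ) + Complex.I ∧
      (∫ t in (0:ℝ)..1, Real.exp (1 - (γ t).im) * ‖deriv γ t‖) = |x' - x| := by
  set f : ℝ → ℝ := fun _ => 1 with hf
  have hder : ∀ t, HasDerivAt f ((fun _ => (0:ℝ)) t) t := fun t => hasDerivAt_const t 1
  refine ⟨pth x (x'-x) f, pth_contDiff _ _ _ contDiff_const, ?_, ?_, ?_, ?_⟩
  · intro t; rw [pth_im]
  · apply Complex.ext <;> simp [pth_re, pth_im, hf]
  · apply Complex.ext <;> simp [pth_re, pth_im, hf]
  · have e1 : (fun t => Real.exp (1 - ((pth x (x'-x) f) t).im) * ‖deriv (pth x (x'-x) f) t‖)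
        = fun _ : ℝ => |x' - x| := by
      funext t
      rw [pth_im, pth_deriv _ _ _ _ hder]
      simp [hf, ← Complex.ofReal_sub, Complex.norm_real]
    rw [e1]
    simp


-- diagonal path
lemma diag_len_aux (p q : ℂ) (hp : p.im < 1) (hq : q.im = 1) :
    ∃ γ : ℝ → ℂ, ContDiff ℝ 1 γ ∧ (∀ t, (γ t).im ≤ 1) ∧ γ 0 = p ∧ γ 1 = q ∧
      (∫ t in (0:ℝ)..1, Real.exp (1 - (γ t).im) * ‖deriv γ t‖)
        ≤ Real.exp (1 - p.im) - 1 + |q.re - p.re| + 1 := by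
  set h : ℝ := 1 - p.im with hh
  have hh0 : 0 < h := by simp [hh]; linarith
  set Δ : ℝ := q.re - p.re with hΔ
  set M : ℕ := ⌈(Real.exp h - 1) * |Δ|⌉₊ with hM
  set n : ℕ := 2*M+2 with hn
  have hn0 : (0:ℝ) < (n:ℝ) + 1 := by positivity
  set f : ℝ → ℝ := fun t => 1 - h * (1-t)^n with hf
  set f' : ℝ → ℝ := fun t => h * (n*(1-t)^(n-1)) with hf'
  have hder : ∀ t, HasDerivAt f (f' t) t := by
    intro t
    have : HasDerivAt (fun t : ℝ => (1-t)^n) ((n:ℝ)*(1-t)^(n-1)*(0-1)) t :=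
      ((hasDerivAt_const t (1:ℝ)).sub (hasDerivAt_id t)).pow n
    have h2 := (this.const_mul h).const_sub 1
    refine h2.congr_deriv ?_
    simp [hf']
  have hpow_nonneg : ∀ t : ℝ, 0 ≤ (1-t)^n := by
    intro t
    have : (1-t)^n = ((1-t)^2)^(M+1) := by rw [hn, ← pow_mul]; ring_nf
    rw [this]; positivity
  refine ⟨pth p.re Δ f, pth_contDiff _ _ _ ?_, ?_, ?_, ?_, ?_⟩
  · exact contDiff_const.sub (contDiff_const.mul ((contDiff_const.sub contDiff_id).pow n))
  · intro t
    rw [pth_im]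
    have := mul_nonneg hh0.le (hpow_nonneg t)
    simp [hf]; linarith
  · apply Complex.ext
    · simp [pth_re]
    · simp [pth_im, hf]; linarith
  · apply Complex.ext
    · simp [pth_re, hΔ]
    · simp [pth_im, hf, hn, hq]
  · -- length bound
    have e1 : (fun t => Real.exp (1 - ((pth p.re Δ f) t).im) * ‖deriv (pth p.re Δ f) t‖)
        = fun t => Real.exp (h*(1-t)^n) * ‖(Δ:ℂ) + ((f' t : ℝ):ℂ) * Complex.I‖ := by
      funext t
      rw [pth_im, pth_deriv _ _ _ _ hder]
      have : (1 : ℝ) - f t = h*(1-t)^n := by simp [hf]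
      rw [this]
    rw [e1]
    have hf'nonneg : ∀ t ∈ Set.Icc (0:ℝ) 1, 0 ≤ f' t := by
      intro t ht
      have h1t : 0 ≤ 1 - t := by linarith [ht.2]
      simp only [hf']
      positivity
    -- step A+B : pointwise bound on [0,1]
    have stepAB : ∫ t in (0:ℝ)..1, Real.exp (h*(1-t)^n) * ‖(Δ:ℂ) + ((f' t : ℝ):ℂ) * Complex.I‖
        ≤ ∫ t in (0:ℝ)..1,
            ((|Δ| + (Real.exp h - 1)*|Δ| * (1-t)^n) + Real.exp (h*(1-t)^n) * f' t) := by
      refine intervalIntegral.integral_mono_on zero_le_one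
        ((by fun_prop : Continuous fun t => Real.exp (h*(1-t)^n) *
          ‖(Δ:ℂ) + ((f' t : ℝ):ℂ) * Complex.I‖).intervalIntegrable 0 1)
        ((by fun_prop : Continuous fun t =>
          ((|Δ| + (Real.exp h - 1)*|Δ| * (1-t)^n) + Real.exp (h*(1-t)^n) * f' t)).intervalIntegrable 0 1)
        (fun t ht => ?_)
      have h1t : 0 ≤ 1 - t := by linarith [ht.2]
      have hnorm : ‖(Δ:ℂ) + ((f' t : ℝ):ℂ) * Complex.I‖ ≤ |Δ| + f' t := by
        refine (norm_add_le _ _).trans ?_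
        simp [Complex.norm_real, abs_of_nonneg (hf'nonneg t ht)]
      have hs1 : (1-t)^n ≤ 1 := pow_le_one₀ h1t (by linarith [ht.1])
      have hexp : Real.exp (h*(1-t)^n) ≤ 1 + (Real.exp h - 1)*(1-t)^n :=
        exp_convex_bound (hpow_nonneg t) hs1
      have e0 : (0:ℝ) ≤ Real.exp (h*(1-t)^n) := (Real.exp_pos _).le
      calc Real.exp (h*(1-t)^n) * ‖(Δ:ℂ) + ((f' t : ℝ):ℂ) * Complex.I‖
          ≤ Real.exp (h*(1-t)^n) * (|Δ| + f' t) := by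
            exact mul_le_mul_of_nonneg_left hnorm e0
        _ = Real.exp (h*(1-t)^n) * |Δ| + Real.exp (h*(1-t)^n) * f' t := by ring
        _ ≤ (1 + (Real.exp h - 1)*(1-t)^n) * |Δ| + Real.exp (h*(1-t)^n) * f' t := by
            have := mul_le_mul_of_nonneg_right hexp (abs_nonneg Δ)
            linarith
        _ = (|Δ| + (Real.exp h - 1)*|Δ| * (1-t)^n) + Real.exp (h*(1-t)^n) * f' t := by ring
    -- compute the RHS integral
    have int1 : ∫ t in (0:ℝ)..1, (1-t)^n = 1/((n:ℝ)+1) := by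
      have hFTC : ∀ t : ℝ, HasDerivAt (fun t : ℝ => -(1-t)^(n+1)/((n:ℝ)+1)) ((1-t)^n) t := by
        intro t
        have : HasDerivAt (fun t : ℝ => (1-t)^(n+1)) (((n:ℝ)+1)*(1-t)^n*(0-1)) t := by
          have := ((hasDerivAt_const t (1:ℝ)).sub (hasDerivAt_id t)).pow (n+1)
          refine this.congr_deriv ?_
          push_cast
          simp
        have h2 := (this.neg).div_const ((n:ℝ)+1)
        refine h2.congr_deriv ?_
        field_simp
        ring
      rw [intervalIntegral.integral_eq_sub_of_hasDerivAt (fun t _ => hFTC t)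
        ((by fun_prop : Continuous fun t : ℝ => (1-t)^n).intervalIntegrable 0 1)]
      simp; ring
    have int2 : ∫ t in (0:ℝ)..1, Real.exp (h*(1-t)^n) * f' t = Real.exp h - 1 := by
      have hFTC : ∀ t : ℝ, HasDerivAt (fun t : ℝ => -Real.exp (h*(1-t)^n))
          (Real.exp (h*(1-t)^n) * f' t) t := by
        intro t
        have hu : HasDerivAt (fun t : ℝ => h*(1-t)^n) (h*((n:ℝ)*(1-t)^(n-1)*(0-1))) t :=
          (((hasDerivAt_const t (1:ℝ)).sub (hasDerivAt_id t)).pow n).const_mul h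
        have := hu.exp.neg
        refine this.congr_deriv ?_
        simp [hf']
      rw [intervalIntegral.integral_eq_sub_of_hasDerivAt (fun t _ => hFTC t)
        ((by fun_prop : Continuous fun t => Real.exp (h*(1-t)^n) * f' t).intervalIntegrable 0 1)]
      have : ((1:ℝ)-1)^n = 0 := by simp [hn]
      simp [this]
      ring
    have intsplit : ∫ t in (0:ℝ)..1,
        ((|Δ| + (Real.exp h - 1)*|Δ| * (1-t)^n) + Real.exp (h*(1-t)^n) * f' t)
        = (|Δ| + (Real.exp h - 1)*|Δ| * (1/((n:ℝ)+1))) + (Real.exp h - 1) := by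
      rw [intervalIntegral.integral_add
        ((by fun_prop : Continuous fun t : ℝ => |Δ| + (Real.exp h - 1)*|Δ| * (1-t)^n).intervalIntegrable 0 1)
        ((by fun_prop : Continuous fun t => Real.exp (h*(1-t)^n) * f' t).intervalIntegrable 0 1),
        intervalIntegral.integral_add
        ((by fun_prop : Continuous fun _ : ℝ => |Δ|).intervalIntegrable 0 1)
        ((by fun_prop : Continuous fun t : ℝ => (Real.exp h - 1)*|Δ| * (1-t)^n).intervalIntegrable 0 1),
        intervalIntegral.integral_const_mul, int1, int2]
      simp
    -- final arithmetic
    have hceil : (Real.exp h - 1) * |Δ| ≤ (n:ℝ) + 1 := by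
      have h1 : (Real.exp h - 1) * |Δ| ≤ (M:ℝ) := Nat.le_ceil _
      have h2 : (M:ℝ) ≤ (n:ℝ) + 1 := by
        rw [hn]; push_cast; linarith [Nat.cast_nonneg (α := ℝ) M]
      linarith
    have hfrac : (Real.exp h - 1)*|Δ| * (1/((n:ℝ)+1)) ≤ 1 := by
      rw [mul_one_div, div_le_one hn0]
      exact hceil
    calc (∫ t in (0:ℝ)..1, Real.exp (h*(1-t)^n) * ‖(Δ:ℂ) + ((f' t : ℝ):ℂ) * Complex.I‖)
        ≤ (|Δ| + (Real.exp h - 1)*|Δ| * (1/((n:ℝ)+1))) + (Real.exp h - 1) := by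
          rw [← intsplit]; exact stepAB
      _ ≤ Real.exp (1 - p.im) - 1 + |q.re - p.re| + 1 := by
          rw [← hh, ← hΔ]; linarith

theorem dQ_approximate_additivity :
    ∃ C : ℝ, ∀ p : ℂ, p.im < 1 → ∀ q : ℂ, q.im = 1 →
      |dQ p q - dQ p (projBeta p) - dQ (projBeta p) q| ≤ C := by
  refine ⟨2, fun p hp q hq => ?_⟩
  have hq' : (q.re:ℂ) + Complex.I = q := by
    apply Complex.ext <;> simp [hq]
  have hproj : projBeta p = (p.re:ℂ) + Complex.I := rfl
  -- vertical
  obtain ⟨γv, cv, iv, v0, v1, vlen⟩ := vert_len_aux p hp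
  have uA : dQ p (projBeta p) ≤ Real.exp (1 - p.im) - 1 := by
    rw [← vlen]
    exact dQ_le _ _ cv iv v0 (by rw [v1, hproj])
  have hpre : (projBeta p).re = p.re := by simp [projBeta]
  have hpim : (projBeta p).im = 1 := by simp [projBeta]
  have hF1 : Fw 1 = 2 := by norm_num [Fw]
  have hFp : Fw p.im = Real.exp (1 - p.im) + Real.exp (p.im - 1) := rfl
  have lA : Real.exp (1 - p.im) + Real.exp (p.im - 1) - 2 ≤ dQ p (projBeta p) := by
    have hlow := dQ_ge p (projBeta p) ⟨γv, cv, iv, v0, by rw [v1, hproj]⟩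
    rw [hpre, hpim, sub_self, abs_zero, hF1, hFp] at hlow
    linarith
  -- horizontal
  obtain ⟨γh, ch, ih, h0, h1, hlen⟩ := horiz_len_aux p.re q.re
  have uB : dQ (projBeta p) q ≤ |q.re - p.re| := by
    rw [← hlen]
    exact dQ_le _ _ ch ih (by rw [h0, hproj]) (by rw [h1, hq'])
  have lB : |q.re - p.re| ≤ dQ (projBeta p) q := by
    have hlow := dQ_ge (projBeta p) q ⟨γh, ch, ih, by rw [h0, hproj], by rw [h1, hq']⟩
    rw [hpre, hpim, hq, hF1] at hlow
    linarith
  -- diagonal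
  obtain ⟨γd, cd, id', d0, d1, dlen⟩ := diag_len_aux p q hp hq
  have uD : dQ p q ≤ Real.exp (1 - p.im) - 1 + |q.re - p.re| + 1 :=
    (dQ_le _ _ cd id' d0 d1).trans dlen
  have lD : |q.re - p.re| + (Real.exp (1 - p.im) + Real.exp (p.im - 1) - 2) ≤ dQ p q := by
    have hlow := dQ_ge p q ⟨γd, cd, id', d0, d1⟩
    rw [hq, hF1, hFp] at hlow
    linarith
  have he' : 0 < Real.exp (p.im - 1) := Real.exp_pos _
  rw [abs_le]
  constructor <;> linarith
end
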